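/- arXiv:2403.05774 — 9 statements merged into one kernel-verified Lean document; each statement's English description precedes it below -/
import Mathlib

section
/- For every integer d ≥ 2 which is not a prime power, there exists a finite solvable group G such that d divides |G|, the set of primes dividing |G| equals the set of primes dividing d, and G has no subgroup of order d. -/
open SemidirectProduct

namespace NoCLTAux

variable {K : Type} [Field K]

noncomputable def chiAdd (u : ℕ) (η : Kˣ) (hη : η ^ (u : ℕ) = 1) :
    ZMod u →+ Additive Kˣ :=
  ZMod.lift u ⟨zmultiplesHom (Additive Kˣ) (Additive.ofMul η), by
    show ((u : ℤ)) • Additive.ofMul η = 0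
    rw [← ofMul_zpow]; simp [hη]⟩

noncomputable def chi (u : ℕ) (η : Kˣ) (hη : η ^ (u : ℕ) = 1) :
    Multiplicative (ZMod u) →* Kˣ :=
  AddMonoidHom.toMultiplicativeLeft (chiAdd u η hη)

lemma chi_ofAdd_one (u : ℕ) (η : Kˣ) (hη : η ^ (u : ℕ) = 1) :
    chi u η hη (Multiplicative.ofAdd (1 : ZMod u)) = η := by
  have h1 : (1 : ZMod u) = ((1 : ℤ) : ZMod u) := by norm_cast
  show Additive.toMul (chiAdd u η hη (Multiplicative.toAdd (Multiplicative.ofAdd (1 : ZMod u)))) = η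
  rw [toAdd_ofAdd, h1, chiAdd, ZMod.lift_coe]
  simp

def scalarAut (a : ℕ) : Kˣ →* MulAut (Multiplicative (Fin a → K)) where
  toFun s := AddEquiv.toMultiplicative (DistribMulAction.toAddAut Kˣ (Fin a → K) s)
  map_one' := by
    ext x : 1
    show Multiplicative.ofAdd ((1 : Kˣ) • x.toAdd) = x
    simp
  map_mul' s t := by
    ext x : 1
    show Multiplicative.ofAdd ((s * t) • x.toAdd) = Multiplicative.ofAdd (s • t • x.toAdd)
    rw [mul_smul]

lemma scalarAut_apply {a : ℕ} (s : Kˣ) (v : Fin a → K) :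
    scalarAut a s (Multiplicative.ofAdd v) = Multiplicative.ofAdd (s • v) := rfl

lemma conj_inl {N C : Type} [CommGroup N] [Group C] {φ : C →* MulAut N}
    (g : N ⋊[φ] C) (w : N) : g * inl w * g⁻¹ = inl (φ g.right w) := by
  ext
  · show g.left * φ g.right w * φ (g * inl w).right (φ g.right⁻¹ g.left⁻¹) = φ g.right w
    simp [mul_comm, mul_assoc, ← map_mul]
  · simp

set_option maxHeartbeats 2000000 in
set_option synthInstance.maxHeartbeats 400000 in
lemma key (p u Q a : ℕ) (hp : p.Prime) (hQ2 : 2 ≤ Q) (hQu : Q ∣ u)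
    (hpu : ¬ p ∣ u) (ha : 1 ≤ a) (hnd : ¬ Q ∣ p ^ a - 1) :
    ∃ (G : Type) (_ : Group G) (_ : Finite G), IsSolvable G ∧
      (∃ m : ℕ, a ≤ m ∧ Nat.card G = p ^ m * u) ∧
      ∀ H : Subgroup G, Nat.card H ≠ p ^ a * u := by
  haveI : Fact p.Prime := ⟨hp⟩
  have hu0 : u ≠ 0 := fun h => hpu (h ▸ dvd_zero p)
  haveI : NeZero u := ⟨hu0⟩
  have hpQ : ¬ p ∣ Q := fun h => hpu (h.trans hQu)
  have hcop : Nat.Coprime p Q := hp.coprime_iff_not_dvd.mpr hpQ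
  set n := Q.totient with hn_def
  have hn : n ≠ 0 := (Nat.totient_pos.mpr (by omega : 0 < Q)).ne'
  -- the Galois field
  set K : Type := GaloisField p n with hK_def
  have hcardK : Nat.card K = p ^ n := GaloisField.card p n hn
  have hcardKx : Nat.card Kˣ = p ^ n - 1 := by
    rw [Nat.card_units, hcardK]
  have hQdvd : Q ∣ p ^ n - 1 := by
    have := Nat.ModEq.pow_totient hcop
    exact (Nat.modEq_iff_dvd' (Nat.one_le_pow _ _ hp.pos)).mp this.symm
  -- an element of order Q
  obtain ⟨g, hg⟩ := IsCyclic.exists_ofOrder_eq_natCard (α := Kˣ)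
  have hgQ : Q ∣ orderOf g := by rw [hg, hcardKx]; exact hQdvd
  have hg0 : orderOf g ≠ 0 := by
    rw [hg, hcardKx]
    have : 2 ≤ p ^ n := hp.two_le.trans (Nat.le_self_pow hn p)
    omega
  set η : Kˣ := g ^ (orderOf g / Q) with hη_def
  have hηQ : orderOf η = Q := orderOf_pow_orderOf_div hg0 hgQ
  have hηu : η ^ (u : ℕ) = 1 := orderOf_dvd_iff_pow_eq_one.mp (hηQ ▸ hQu)
  -- the group
  set N : Type := Multiplicative (Fin a → K) with hN_def
  set C : Type := Multiplicative (ZMod u) with hC_def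
  set φ : C →* MulAut N := (scalarAut a).comp (chi u η hηu) with hφ_def
  refine ⟨N ⋊[φ] C, inferInstance, ?_, ?_, ?_, ?_⟩
  · -- finiteness
    exact Finite.of_equiv (N × C)
      ⟨fun z => ⟨z.1, z.2⟩, fun x => (x.left, x.right), fun z => rfl, fun x => rfl⟩
  · -- solvability
    exact solvable_of_ker_le_range inl rightHom (le_of_eq range_inl_eq_ker_rightHom.symm)
  · -- cardinality
    refine ⟨n * a, Nat.le_mul_of_pos_left a (Nat.pos_of_ne_zero hn), ?_⟩
    have e1 : (N ⋊[φ] C) ≃ N × C :=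
      ⟨fun x => (x.left, x.right), fun z => ⟨z.1, z.2⟩, fun x => rfl, fun z => rfl⟩
    rw [Nat.card_congr e1, Nat.card_prod]
    have : Nat.card N = p ^ (n * a) := by
      rw [hN_def, Nat.card_congr Multiplicative.ofAdd.symm, Nat.card_pi]
      simp [hcardK, Finset.prod_const, pow_mul]
    rw [this, hC_def, Nat.card_congr Multiplicative.ofAdd.symm, Nat.card_zmod]
  · -- no subgroup of order p ^ a * u
    haveI : Finite (N ⋊[φ] C) := Finite.of_equiv (N × C)
      ⟨fun z => ⟨z.1, z.2⟩, fun x => (x.left, x.right), fun z => rfl, fun x => rfl⟩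
    have hcardN : Nat.card N = p ^ (n * a) := by
      rw [hN_def, Nat.card_congr Multiplicative.ofAdd.symm, Nat.card_pi]
      simp [hcardK, Finset.prod_const, pow_mul]
    have hcardC : Nat.card C = u := by
      rw [hC_def, Nat.card_congr Multiplicative.ofAdd.symm, Nat.card_zmod]
    intro H hH
    set ψ : H →* C := rightHom.comp H.subtype with hψ_def
    have hcount : Nat.card H = Nat.card ψ.range * Nat.card ψ.ker := by
      rw [Subgroup.card_eq_card_quotient_mul_card_subgroup ψ.ker,
        Nat.card_congr (QuotientGroup.quotientKerEquivRange ψ).toEquiv]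
    -- the kernel embeds in N
    have hker_right : ∀ x : ψ.ker, ((x.val.val : N ⋊[φ] C)).right = 1 := fun x => x.property
    set ν : ψ.ker →* N := {
      toFun := fun x => ((x.val.val : N ⋊[φ] C)).left,
      map_one' := rfl,
      map_mul' := fun x y => by
        show ((x.val.val : N ⋊[φ] C) * (y.val.val : N ⋊[φ] C)).left = _
        rw [mul_left, hker_right x, map_one]
        rfl } with hν_def
    have hνinj : Function.Injective ν := by
      intro x y hxy
      apply Subtype.ext; apply Subtype.ext
      exact SemidirectProduct.ext hxy ((hker_right x).trans (hker_right y).symm)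
    have hkerdvd : Nat.card ψ.ker ∣ p ^ (n * a) := by
      have h := Subgroup.card_dvd_of_injective ν hνinj
      rwa [hcardN] at h
    obtain ⟨s, hs_le, hkercard⟩ := (Nat.dvd_prime_pow hp).mp hkerdvd
    have htdvd : Nat.card ψ.range ∣ u := by
      have h := Subgroup.card_subgroup_dvd_card ψ.range
      rwa [hcardC] at h
    have hcopu : Nat.Coprime p u := hp.coprime_iff_not_dvd.mpr hpu
    -- s = a
    have hsa : s = a := by
      have h1 : p ^ s ∣ p ^ a * u := by
        rw [← hH, hcount, hkercard]; exact dvd_mul_left _ _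
      have h2 : p ^ s ∣ p ^ a := (Nat.Coprime.pow_left s hcopu).dvd_of_dvd_mul_right h1
      have h3 : p ^ a ∣ Nat.card ψ.range * p ^ s := by
        rw [← hkercard, ← hcount, hH]; exact dvd_mul_right _ _
      have h4 : p ^ a ∣ p ^ s := by
        have hc : Nat.Coprime (p ^ a) (Nat.card ψ.range) :=
          Nat.Coprime.coprime_dvd_right htdvd (Nat.Coprime.pow_left a hcopu)
        rw [mul_comm] at h3
        exact hc.dvd_of_dvd_mul_right h3
      exact Nat.pow_dvd_pow_iff_le_right hp.one_lt |>.mp h2 |>.antisymm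
        (Nat.pow_dvd_pow_iff_le_right hp.one_lt |>.mp h4)
    have htu : Nat.card ψ.range = u := by
      have := hH.symm.trans hcount
      rw [hkercard, hsa] at this
      have hpa : 0 < p ^ a := Nat.pow_pos (n := a) hp.pos
      rw [mul_comm (Nat.card ψ.range) _] at this
      exact (Nat.eq_of_mul_eq_mul_left hpa this).symm
    have hrange_top : ψ.range = ⊤ := Subgroup.eq_top_of_card_eq _ (by rw [htu, hcardC])
    -- a lift of the generator
    have hmemtop : Multiplicative.ofAdd (1 : ZMod u) ∈ ψ.range := by rw [hrange_top]; trivial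
    obtain ⟨h₀, hh₀⟩ := hmemtop
    -- closure of the fiber over 1 under multiplication by η
    have hηW : ∀ w : Fin a → K, (inl (Multiplicative.ofAdd w) : N ⋊[φ] C) ∈ H →
        (inl (Multiplicative.ofAdd ((η : K) • w)) : N ⋊[φ] C) ∈ H := by
      intro w hw
      have hmem : (h₀ : N ⋊[φ] C) * inl (Multiplicative.ofAdd w) * (h₀ : N ⋊[φ] C)⁻¹ ∈ H :=
        H.mul_mem (H.mul_mem h₀.property hw) (H.inv_mem h₀.property)
      have hconj := conj_inl (φ := φ) (h₀ : N ⋊[φ] C) (Multiplicative.ofAdd w)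
      have hr : ((h₀ : N ⋊[φ] C)).right = Multiplicative.ofAdd (1 : ZMod u) := hh₀
      rw [hconj, hr] at hmem
      have hφval : φ (Multiplicative.ofAdd (1 : ZMod u)) (Multiplicative.ofAdd w)
          = Multiplicative.ofAdd ((η : K) • w) := by
        show scalarAut a (chi u η hηu (Multiplicative.ofAdd (1 : ZMod u)))
          (Multiplicative.ofAdd w) = _
        rw [chi_ofAdd_one, scalarAut_apply]
        congr 1
      rwa [hφval] at hmem
    -- the subfield generated by η
    set E : Subalgebra (ZMod p) K := Algebra.adjoin (ZMod p) {(η : K)} with hE_def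
    -- closure of the fiber under all scalars from E
    have hEW : ∀ x : K, x ∈ E → ∀ w : Fin a → K,
        (inl (Multiplicative.ofAdd w) : N ⋊[φ] C) ∈ H →
        (inl (Multiplicative.ofAdd (x • w)) : N ⋊[φ] C) ∈ H := by
      intro x hx
      induction hx using Algebra.adjoin_induction with
      | mem y hy =>
        rw [Set.mem_singleton_iff] at hy
        subst hy
        exact hηW
      | algebraMap r =>
        intro w hw
        have hcast : algebraMap (ZMod p) K r = ((r.val : ℕ) : K) := by
          conv_lhs => rw [← ZMod.natCast_rightInverse r]
          rw [map_natCast]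
        rw [hcast, Nat.cast_smul_eq_nsmul]
        have : Multiplicative.ofAdd (r.val • w) = (Multiplicative.ofAdd w) ^ r.val := rfl
        rw [this, map_pow]
        exact H.pow_mem hw r.val
      | add x y hxE hyE hx hy =>
        intro w hw
        rw [add_smul]
        have : Multiplicative.ofAdd (x • w + y • w)
            = Multiplicative.ofAdd (x • w) * Multiplicative.ofAdd (y • w) := rfl
        rw [this, map_mul]
        exact H.mul_mem (hx w hw) (hy w hw)
      | mul x y hxE hyE hx hy =>
        intro w hw
        rw [mul_smul]
        exact hx _ (hy w hw)
    -- the invariant submodule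
    set W : Submodule E (Fin a → K) :=
      { carrier := {w | (inl (Multiplicative.ofAdd w) : N ⋊[φ] C) ∈ H}
        zero_mem' := by
          show (inl (Multiplicative.ofAdd (0 : Fin a → K)) : N ⋊[φ] C) ∈ H
          have : (inl (Multiplicative.ofAdd (0 : Fin a → K)) : N ⋊[φ] C) = 1 := rfl
          rw [this]; exact H.one_mem
        add_mem' := by
          intro w1 w2 h1 h2
          show (inl (Multiplicative.ofAdd (w1 + w2)) : N ⋊[φ] C) ∈ H
          have : Multiplicative.ofAdd (w1 + w2)
              = Multiplicative.ofAdd w1 * Multiplicative.ofAdd w2 := rfl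
          rw [this, map_mul]
          exact H.mul_mem h1 h2
        smul_mem' := by
          intro e w hw
          have : e • w = (e : K) • w := rfl
          show (inl (Multiplicative.ofAdd (e • w)) : N ⋊[φ] C) ∈ H
          rw [this]
          exact hEW (e : K) e.property w hw } with hW_def
    -- the kernel is in bijection with W
    have eWker : ψ.ker ≃ W :=
      { toFun := fun x => ⟨Multiplicative.toAdd ((x.val.val : N ⋊[φ] C)).left, by
          show (inl (Multiplicative.ofAdd (Multiplicative.toAdd _)) : N ⋊[φ] C) ∈ H
          rw [ofAdd_toAdd]
          have hx : (inl ((x.val.val : N ⋊[φ] C)).left : N ⋊[φ] C) = x.val.val :=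
            SemidirectProduct.ext rfl (hker_right x).symm
          rw [hx]
          exact x.val.property⟩
        invFun := fun w => ⟨⟨inl (Multiplicative.ofAdd w.val), w.property⟩, by
          show ψ ⟨inl (Multiplicative.ofAdd w.val), w.property⟩ = 1
          show rightHom (inl (Multiplicative.ofAdd w.val) : N ⋊[φ] C) = 1
          simp⟩
        left_inv := fun x => by
          apply Subtype.ext; apply Subtype.ext
          exact SemidirectProduct.ext rfl (hker_right x).symm
        right_inv := fun w => by
          apply Subtype.ext
          rfl }
    have hcardW : Nat.card W = p ^ a := by
      rw [← Nat.card_congr eWker, hkercard, hsa]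
    -- E is a finite field
    haveI : Fintype E := Fintype.ofFinite E
    haveI : Fintype W := Fintype.ofFinite W
    letI : Field E := @Fintype.fieldOfDomain E _ _ (Classical.decEq E) _
    haveI : Fintype (ZMod p) := inferInstance
    have hcardE : Fintype.card E = p ^ Module.finrank (ZMod p) E := by
      have := Module.card_eq_pow_finrank (K := ZMod p) (V := E)
      rwa [ZMod.card p] at this
    have hcardW2 : Fintype.card W = Fintype.card E ^ Module.finrank E W :=
      Module.card_eq_pow_finrank (K := E) (V := W)
    set m := Module.finrank (ZMod p) E with hm_def
    set r := Module.finrank E W with hr_def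
    -- p ^ a = p ^ (m * r)
    have hpa_eq : p ^ a = p ^ (m * r) := by
      rw [← hcardW, Nat.card_eq_fintype_card, hcardW2, hcardE, ← pow_mul]
    have hamr : a = m * r := Nat.pow_right_injective hp.two_le hpa_eq
    -- m and r are positive
    have hEnontriv : Nontrivial E := ⟨⟨0, 1, by
      intro h
      exact zero_ne_one (congrArg (Subtype.val) h)⟩⟩
    have hm1 : 1 ≤ m := by
      by_contra hm
      have : m = 0 := by omega
      rw [this, pow_zero] at hcardE
      exact (Fintype.one_lt_card (α := E)).ne' hcardE
    have hr1 : 1 ≤ r := by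
      by_contra hr
      have : r = 0 := by omega
      rw [this, Nat.mul_zero] at hamr
      omega
    -- η gives an element of order Q in Eˣ
    set ηE : E := ⟨(η : K), hE_def ▸ Algebra.self_mem_adjoin_singleton (ZMod p) (η : K)⟩ with hηE_def
    have hηEne : ηE ≠ 0 := by
      intro h
      exact Units.ne_zero η (congrArg Subtype.val h)
    have hηEunit : IsUnit ηE := isUnit_iff_ne_zero.mpr hηEne
    have hordηE : orderOf ηE = Q := by
      have h1 : orderOf ((algebraMap E K).toMonoidHom ηE) = orderOf ηE :=
        orderOf_injective (algebraMap E K).toMonoidHom (fun x y hxy => Subtype.ext hxy) ηE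
      have h2 : (algebraMap E K).toMonoidHom ηE = (η : K) := rfl
      rw [h2] at h1
      rw [← h1, orderOf_units, hηQ]
    have hordunit : orderOf hηEunit.unit = Q := by
      rw [← orderOf_units, IsUnit.unit_spec, hordηE]
    have hQE : Q ∣ Fintype.card E - 1 := by
      have hd := orderOf_dvd_natCard (hηEunit.unit)
      rwa [Nat.card_units, Nat.card_eq_fintype_card, hordunit] at hd
    -- final contradiction
    have hdvd1 : p ^ m - 1 ∣ p ^ a - 1 := by
      rw [hamr, pow_mul]
      have := Nat.sub_dvd_pow_sub_pow (p ^ m) 1 r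
      rwa [one_pow] at this
    rw [hcardE] at hQE
    exact hnd (hQE.trans hdvd1)

end NoCLTAux


/-- For every integer d ≥ 2 which is not a prime power, there is a finite solvable group G
with d ∣ |G|, π(G) = π(d), and no subgroup of order d. -/
theorem exists_solvable_group_no_subgroup_of_order
    (d : ℕ) (hd : 2 ≤ d) (hpp : ¬ IsPrimePow d) :
    ∃ (G : Type) (_ : Group G) (_ : Finite G), IsSolvable G ∧
      d ∣ Nat.card G ∧ (Nat.card G).primeFactors = d.primeFactors ∧
      ∀ H : Subgroup G, Nat.card H ≠ d := by
  have hd0 : d ≠ 0 := by omega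
  have hd1 : d ≠ 1 := by omega
  set p := d.minFac with hp_def
  have hp : p.Prime := Nat.minFac_prime hd1
  set a := d.factorization p with ha_def
  have ha1 : 1 ≤ a := hp.factorization_pos_of_dvd hd0 (Nat.minFac_dvd d)
  set u := ordCompl[p] d with hu_def
  have hdu : p ^ a * u = d := Nat.ordProj_mul_ordCompl_eq_self d p
  have hpu : ¬ p ∣ u := Nat.not_dvd_ordCompl hp hd0
  have hu0 : u ≠ 0 := (Nat.ordCompl_pos p hd0).ne'
  have hu1 : u ≠ 1 := by
    intro h
    apply hpp
    rw [← hdu, h, mul_one]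
    exact ⟨p, a, hp.prime, ha1, rfl⟩
  set q := u.minFac with hq_def
  have hq : q.Prime := Nat.minFac_prime hu1
  have hqu : q ∣ u := Nat.minFac_dvd u
  have hqd : q ∣ d := hqu.trans (Nat.ordCompl_dvd d p)
  have hqp : q ≠ p := fun h => hpu (h ▸ hqu)
  set b := d.factorization q with hb_def
  have hb1 : 1 ≤ b := hq.factorization_pos_of_dvd hd0 hqd
  have hQu : q ^ b ∣ u := by
    have h1 : u.factorization q = b := by
      rw [hu_def, Nat.factorization_ordCompl d p, Finsupp.erase_ne hqp]
    calc q ^ b = q ^ u.factorization q := by rw [h1]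
    _ ∣ u := Nat.ordProj_dvd u q
  set u' := ordCompl[q] d with hu'_def
  have hdu' : q ^ b * u' = d := Nat.ordProj_mul_ordCompl_eq_self d q
  have hqu' : ¬ q ∣ u' := Nat.not_dvd_ordCompl hq hd0
  have hu'0 : u' ≠ 0 := (Nat.ordCompl_pos q hd0).ne'
  have hPu' : p ^ a ∣ u' := by
    have h1 : u'.factorization p = a := by
      rw [hu'_def, Nat.factorization_ordCompl d q, Finsupp.erase_ne hqp.symm]
    calc p ^ a = p ^ u'.factorization p := by rw [h1]
    _ ∣ u' := Nat.ordProj_dvd u' p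
  have hA2 : 2 ≤ p ^ a := le_trans hp.two_le (Nat.le_self_pow (by omega) p)
  have hB2 : 2 ≤ q ^ b := le_trans hq.two_le (Nat.le_self_pow (by omega) q)
  rcases em (q ^ b ∣ p ^ a - 1) with hdir | hdir
  · have hdir2 : ¬ p ^ a ∣ q ^ b - 1 := by
      intro h
      have h1 : q ^ b ≤ p ^ a - 1 := Nat.le_of_dvd (by omega) hdir
      have h2 : p ^ a ≤ q ^ b - 1 := Nat.le_of_dvd (by omega) h
      omega
    obtain ⟨G, hG, hF, hsolv, ⟨mm, hmm, hcard⟩, hnosub⟩ :=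
      NoCLTAux.key q u' (p ^ a) b hq hA2 hPu' hqu' hb1 hdir2
    refine ⟨G, hG, hF, hsolv, ?_, ?_, ?_⟩
    · rw [hcard, ← hdu']
      exact Nat.mul_dvd_mul (pow_dvd_pow q hmm) dvd_rfl
    · rw [hcard, ← hdu', Nat.primeFactors_mul (pow_ne_zero _ hq.pos.ne') hu'0,
        Nat.primeFactors_mul (pow_ne_zero _ hq.pos.ne') hu'0,
        Nat.primeFactors_pow q (show mm ≠ 0 by omega),
        Nat.primeFactors_pow q (show b ≠ 0 by omega)]
    · intro H
      rw [← hdu']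
      exact hnosub H
  · obtain ⟨G, hG, hF, hsolv, ⟨mm, hmm, hcard⟩, hnosub⟩ :=
      NoCLTAux.key p u (q ^ b) a hp hB2 hQu hpu ha1 hdir
    refine ⟨G, hG, hF, hsolv, ?_, ?_, ?_⟩
    · rw [hcard, ← hdu]
      exact Nat.mul_dvd_mul (pow_dvd_pow p hmm) dvd_rfl
    · rw [hcard, ← hdu, Nat.primeFactors_mul (pow_ne_zero _ hp.pos.ne') hu0,
        Nat.primeFactors_mul (pow_ne_zero _ hp.pos.ne') hu0,
        Nat.primeFactors_pow p (show mm ≠ 0 by omega),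
        Nat.primeFactors_pow p (show a ≠ 0 by omega)]
    · intro H
      rw [← hdu]
      exact hnosub H
end

section
/- Let G be a Frobenius group with kernel N and let K be a subgroup of G. Then either K ⊆ N, or K ∩ N = 1, or K is a Frobenius group with kernel N ∩ K. -/
/-- G is a Frobenius group with kernel N: G is a semidirect product of the normal
subgroup N by some nontrivial complement H with C_N(h) = 1 for all 1 ≠ h ∈ H. -/
def IsFrobeniusWithKernel (G : Type*) [Group G] (N : Subgroup G) : Prop :=
  N.Normal ∧ N ≠ ⊥ ∧ ∃ H : Subgroup G, H ≠ ⊥ ∧ N.IsComplement' H ∧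
    ∀ h ∈ H, h ≠ 1 → ∀ n ∈ N, h * n * h⁻¹ = n → n = 1

section Aux

variable {G : Type*} [Group G] [Finite G] {N H : Subgroup G}

/-- Every element of the coset `N * h` with `1 ≠ h ∈ H` is `N`-conjugate to `h`. -/
lemma frob_conj (hNormal : N.Normal)
    (hfree : ∀ h ∈ H, h ≠ 1 → ∀ n ∈ N, h * n * h⁻¹ = n → n = 1)
    {h : G} (hh : h ∈ H) (h1 : h ≠ 1) {n : G} (hn : n ∈ N) :
    ∃ m ∈ N, m * h * m⁻¹ = n * h := by
  set f : N → N := fun m => ⟨(m : G) * (h * (m : G)⁻¹ * h⁻¹),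
    mul_mem m.2 (hNormal.conj_mem _ (inv_mem m.2) h)⟩ with hf
  have hinj : Function.Injective f := by
    rintro ⟨a, ha⟩ ⟨b, hb⟩ hab
    have e : a * (h * a⁻¹ * h⁻¹) = b * (h * b⁻¹ * h⁻¹) := congrArg Subtype.val hab
    have e2 : h * a⁻¹ * h⁻¹ = a⁻¹ * (b * (h * b⁻¹ * h⁻¹)) := by rw [← e]; group
    have key : h * (b⁻¹ * a) * h⁻¹ = b⁻¹ * a := by
      calc h * (b⁻¹ * a) * h⁻¹
          = (h * b⁻¹ * h⁻¹) * (h * a⁻¹ * h⁻¹)⁻¹ := by group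
        _ = (h * b⁻¹ * h⁻¹) * (a⁻¹ * (b * (h * b⁻¹ * h⁻¹)))⁻¹ := by rw [← e2]
        _ = b⁻¹ * a := by group
    have : b⁻¹ * a = 1 := hfree h hh h1 _ (mul_mem (inv_mem hb) ha) key
    exact Subtype.ext (inv_mul_eq_one.mp this).symm
  have hsurj : Function.Surjective f := Finite.surjective_of_injective hinj
  obtain ⟨m, hm⟩ := hsurj ⟨n, hn⟩
  refine ⟨m, m.2, ?_⟩
  have : (m : G) * (h * (m : G)⁻¹ * h⁻¹) = n := congrArg Subtype.val hm
  calc (m : G) * h * (m : G)⁻¹ = ((m : G) * (h * (m : G)⁻¹ * h⁻¹)) * h := by group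
    _ = n * h := by rw [this]

/-- In a Frobenius group, the centralizer of a nontrivial element of `N` lies in `N`. -/
lemma frob_centralizer (hNormal : N.Normal) (hcomp : N.IsComplement' H)
    (hfree : ∀ h ∈ H, h ≠ 1 → ∀ n ∈ N, h * n * h⁻¹ = n → n = 1)
    {g : G} (hg : g ∉ N) {n : G} (hn : n ∈ N) (hc : g * n * g⁻¹ = n) : n = 1 := by
  obtain ⟨⟨a, b⟩, hab, -⟩ := hcomp.existsUnique g
  simp only at hab
  have hb1 : (b : G) ≠ 1 := by
    intro hb
    apply hg
    rw [← hab, hb, mul_one]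
    exact a.2
  obtain ⟨m, hm, hmb⟩ := frob_conj hNormal hfree b.2 hb1 a.2
  have hg' : g = m * b * m⁻¹ := by rw [← hab, ← hmb]
  have key : (b : G) * (m⁻¹ * n * m) * (b : G)⁻¹ = m⁻¹ * n * m := by
    calc (b : G) * (m⁻¹ * n * m) * (b : G)⁻¹
        = m⁻¹ * ((m * b * m⁻¹) * n * (m * b * m⁻¹)⁻¹) * m := by group
      _ = m⁻¹ * (g * n * g⁻¹) * m := by rw [← hg']
      _ = m⁻¹ * n * m := by rw [hc]
  have : m⁻¹ * n * m = 1 :=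
    hfree b b.2 hb1 _ (mul_mem (mul_mem (inv_mem hm) hn) hm) key
  calc n = m * (m⁻¹ * n * m) * m⁻¹ := by group
    _ = 1 := by rw [this]; group

/-- The kernel and complement of a Frobenius group have coprime orders. -/
lemma frob_coprime (hNormal : N.Normal)
    (hfree : ∀ h ∈ H, h ≠ 1 → ∀ n ∈ N, h * n * h⁻¹ = n → n = 1) :
    Nat.Coprime (Nat.card N) (Nat.card H) := by
  by_contra hncop
  obtain ⟨p, hp, hpN, hpH⟩ := Nat.Prime.not_coprime_iff_dvd.mp hncop
  haveI : Fact p.Prime := ⟨hp⟩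
  haveI := Fintype.ofFinite H
  rw [Nat.card_eq_fintype_card] at hpH
  obtain ⟨x, hx⟩ := exists_prime_orderOf_dvd_card (G := H) p hpH
  set h : G := (x : G) with hhdef
  have hhH : h ∈ H := x.2
  have horder : orderOf h = p := by
    rw [hhdef, Subgroup.orderOf_coe, hx]
  have hh1 : h ≠ 1 := by
    intro h1
    rw [h1, orderOf_one] at horder
    exact hp.ne_one horder.symm
  set P : Subgroup G := Subgroup.zpowers h with hP
  have hPcard : Nat.card P = p ^ 1 := by
    rw [pow_one, hP, Nat.card_zpowers, horder]
  have hPp : IsPGroup p P := IsPGroup.of_card hPcard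
  haveI := hNormal
  letI : MulAction P N := MulAction.compHom _ ((MulAut.conjNormal (H := N)).comp P.subtype)
  have hsmul : ∀ (g : P) (n : N), ((g • n : N) : G) = g * n * g⁻¹ := fun g n =>
    MulAut.conjNormal_apply (g : G) n
  have hfix : MulAction.fixedPoints P N = {1} := by
    ext n
    simp only [MulAction.mem_fixedPoints, Set.mem_singleton_iff]
    constructor
    · intro hfixn
      have hfx := hfixn ⟨h, Subgroup.mem_zpowers h⟩
      have hc2 : (((⟨h, Subgroup.mem_zpowers h⟩ : P) • n : N) : G) = h * n * h⁻¹ :=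
        hsmul _ n
      rw [hfx] at hc2
      exact Subtype.ext (hfree h hhH hh1 _ n.2 hc2.symm)
    · rintro rfl g
      apply Subtype.ext
      rw [hsmul]
      simp
  have hmod := hPp.card_modEq_card_fixedPoints N
  rw [hfix] at hmod
  have h1c : Nat.card ({1} : Set N) = 1 := by simp
  rw [h1c] at hmod
  have hpos : 1 ≤ Nat.card N := Nat.one_le_iff_ne_zero.mpr Nat.card_pos.ne'
  have hd1 : p ∣ Nat.card N - 1 := (Nat.modEq_iff_dvd' hpos).mp hmod.symm
  have : p ∣ 1 := by
    have := Nat.dvd_sub hpN hd1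
    rwa [Nat.sub_sub_self hpos] at this
  exact hp.ne_one (Nat.eq_one_of_dvd_one this)

end Aux

/-- If G is a Frobenius group with kernel N and K ≤ G, then K ⊆ N, or K ∩ N = 1,
or K is a Frobenius group with kernel N ∩ K. -/
theorem frobenius_subgroup_trichotomy (G : Type*) [Group G] [Finite G]
    (N : Subgroup G) (hG : IsFrobeniusWithKernel G N) (K : Subgroup G) :
    K ≤ N ∨ K ⊓ N = ⊥ ∨ IsFrobeniusWithKernel K (N.subgroupOf K) := by
  by_cases h1 : K ≤ N
  · exact Or.inl h1
  by_cases h2 : K ⊓ N = ⊥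
  · exact Or.inr (Or.inl h2)
  refine Or.inr (Or.inr ?_)
  obtain ⟨hNormal, hNbot, H, hHbot, hcomp, hfree⟩ := hG
  haveI := hNormal
  set M : Subgroup K := N.subgroupOf K with hM
  haveI : M.Normal := Subgroup.normal_subgroupOf
  -- coprimality of |M| and its index in K
  have hcopG : Nat.Coprime (Nat.card N) (Nat.card H) := frob_coprime hNormal hfree
  have hNindex : N.index = Nat.card H := hcomp.symm.index_eq_card
  have hMcard : Nat.card M ∣ Nat.card N := by
    refine Subgroup.card_dvd_of_injective
      (MonoidHom.mk' (fun m => (⟨((m : K) : G), m.2⟩ : N)) (fun a b => rfl)) ?_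
    intro a b hab
    rw [Subtype.ext_iff] at hab
    exact Subtype.ext (Subtype.ext hab)
  have hMindex : M.index ∣ N.index := Subgroup.relIndex_dvd_index_of_normal N K
  have hcop : Nat.Coprime (Nat.card M) M.index := by
    rw [hNindex] at hMindex
    exact Nat.Coprime.coprime_dvd_right hMindex (Nat.Coprime.coprime_dvd_left hMcard hcopG)
  obtain ⟨H', hH'⟩ := Subgroup.exists_right_complement'_of_coprime hcop
  refine ⟨inferInstance, ?_, H', ?_, hH', ?_⟩
  · -- M ≠ ⊥
    intro hbot
    apply h2
    rw [hM, Subgroup.subgroupOf_eq_bot] at hbot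
    rw [inf_comm]
    exact disjoint_iff.mp hbot
  · -- H' ≠ ⊥
    intro hbot
    rw [hbot, Subgroup.isComplement'_bot_right, hM, Subgroup.subgroupOf_eq_top] at hH'
    exact h1 hH'
  · -- fixed-point-freeness
    intro h hh hne n hn hc
    have hhK : (h : G) ∈ K := h.2
    have hhN : (h : G) ∉ N := by
      intro hmem
      have : h ∈ M := Subgroup.mem_subgroupOf.mpr hmem
      have : h ∈ M ⊓ H' := ⟨this, hh⟩
      rw [hH'.disjoint.eq_bot] at this
      exact hne this
    have hnN : ((n : K) : G) ∈ N := Subgroup.mem_subgroupOf.mp hn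
    have hcG : (h : G) * n * (h : G)⁻¹ = n := by
      have := congrArg (fun x : K => (x : G)) hc
      simpa using this
    have h1' : ((n : K) : G) = 1 := frob_centralizer hNormal hcomp hfree hhN hnN hcG
    have h2' : (n : K) = (1 : K) := Subtype.ext h1'
    exact h2'
end

section
/- Let p1, p2 be distinct primes and n1, n2 positive integers. Let a be the multiplicative order of p1 modulo p2^{n2} and b the multiplicative order of p2 modulo p1^{n1}. Then it is not the case that both a divides n1 and b divides n2. -/
/-- For distinct primes p₁, p₂ and positive integers n₁, n₂, it is not the case that both
the order of p₁ mod p₂^n₂ divides n₁ and the order of p₂ mod p₁^n₁ divides n₂. -/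
theorem not_both_orders_dvd (p₁ p₂ n₁ n₂ : ℕ) (hp₁ : p₁.Prime) (hp₂ : p₂.Prime)
    (hne : p₁ ≠ p₂) (hn₁ : 0 < n₁) (hn₂ : 0 < n₂) :
    ¬ (orderOf (p₁ : ZMod (p₂ ^ n₂)) ∣ n₁ ∧ orderOf (p₂ : ZMod (p₁ ^ n₁)) ∣ n₂) := by
  rintro ⟨h1, h2⟩
  rw [orderOf_dvd_iff_pow_eq_one] at h1 h2
  have e1 : p₁ ^ n₁ ≡ 1 [MOD p₂ ^ n₂] := by
    have : ((p₁ ^ n₁ : ℕ) : ZMod (p₂ ^ n₂)) = ((1 : ℕ) : ZMod (p₂ ^ n₂)) := by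
      push_cast; simpa using h1
    exact (ZMod.natCast_eq_natCast_iff _ _ _).mp this
  have e2 : p₂ ^ n₂ ≡ 1 [MOD p₁ ^ n₁] := by
    have : ((p₂ ^ n₂ : ℕ) : ZMod (p₁ ^ n₁)) = ((1 : ℕ) : ZMod (p₁ ^ n₁)) := by
      push_cast; simpa using h2
    exact (ZMod.natCast_eq_natCast_iff _ _ _).mp this
  have hb1 : 2 ≤ p₁ ^ n₁ := le_trans hp₁.two_le (Nat.le_self_pow hn₁.ne' _)
  have hb2 : 2 ≤ p₂ ^ n₂ := le_trans hp₂.two_le (Nat.le_self_pow hn₂.ne' _)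
  have d1 : p₂ ^ n₂ ∣ p₁ ^ n₁ - 1 := (Nat.modEq_iff_dvd' (by omega)).mp e1.symm
  have d2 : p₁ ^ n₁ ∣ p₂ ^ n₂ - 1 := (Nat.modEq_iff_dvd' (by omega)).mp e2.symm
  have l1 : p₂ ^ n₂ ≤ p₁ ^ n₁ - 1 := Nat.le_of_dvd (by omega) d1
  have l2 : p₁ ^ n₁ ≤ p₂ ^ n₂ - 1 := Nat.le_of_dvd (by omega) d2
  omega
end

section
/- Let p be a prime, n1 a positive integer, and q^{n2} a prime power with q ≠ p such that the multiplicative order a of p modulo q^{n2} does not divide n1. Let r be a positive integer with n1 < ra. Then the affine group AGL(1, p^{ra}) = F_{p^{ra}} ⋊ F_{p^{ra}}^× has no subgroup of order p^{n1} q^{n2}. -/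
set_option maxHeartbeats 1000000
set_option synthInstance.maxHeartbeats 1000000

open Module

variable {F : Type*} [Field F]

/-- The linear-part-at-1 monoid hom from the affine group to `F`. -/
def aglLin (F : Type*) [Field F] : (F ≃ᵃ[F] F) →* F where
  toFun e := e.linear 1
  map_one' := by simp [AffineEquiv.one_def, AffineEquiv.linear_refl]
  map_mul' e e' := by
    show ((e' : F ≃ᵃ[F] F).trans e).linear 1 = _
    show e.linear (e'.linear 1) = _
    rw [show e'.linear 1 = (e'.linear 1) • (1:F) by simp, map_smul]
    simp [mul_comm]

lemma aglLin_linear_apply (e : F ≃ᵃ[F] F) (x : F) : e.linear x = x * aglLin F e := by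
  conv_lhs => rw [show x = x • (1:F) by simp, map_smul]
  simp [aglLin]
  exact Or.inl rfl

lemma agl_apply (e : F ≃ᵃ[F] F) (x : F) : e x = x * aglLin F e + e 0 := by
  have := e.map_vadd 0 x
  simpa [← aglLin_linear_apply] using this

lemma agl_ker_apply (e : F ≃ᵃ[F] F) (h : aglLin F e = 1) (x : F) : e x = x + e 0 := by
  rw [agl_apply, h, mul_one]

lemma agl_ker_pow (e : F ≃ᵃ[F] F) (h : aglLin F e = 1) (n : ℕ) (x : F) :
    (e ^ n) x = x + n • e 0 := by
  induction n generalizing x with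
  | zero => simp [AffineEquiv.one_def]
  | succ n ih =>
    rw [pow_succ, AffineEquiv.mul_def, AffineEquiv.trans_apply, agl_ker_apply e h,
      succ_nsmul, ih]
    ring


lemma agl_conj_zero (g t : F ≃ᵃ[F] F) (ht : aglLin F t = 1) :
    (g * t * g⁻¹) 0 = aglLin F g * t 0 := by
  have hginv : g (g⁻¹ 0) = 0 := by
    rw [AffineEquiv.inv_def]
    exact g.apply_symm_apply 0
  have h1 : (g * t * g⁻¹) 0 = g (t (g⁻¹ 0)) := by
    simp [AffineEquiv.mul_def, AffineEquiv.trans_apply]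
  have h2 := agl_apply g (g⁻¹ 0)
  rw [hginv] at h2
  rw [h1, agl_ker_apply t ht, agl_apply g, add_mul]
  linear_combination -h2

/-- If the order a of p modulo q^n₂ does not divide n₁ and n₁ < r·a, then
AGL(1, p^(r·a)) (the affine group of the field with p^(r·a) elements) has no
subgroup of order p^n₁ · q^n₂. -/
theorem agl_no_subgroup (p q n₁ n₂ r a : ℕ) [Fact p.Prime] (hq : q.Prime)
    (hpq : p ≠ q) (hn₁ : 0 < n₁) (hn₂ : 0 < n₂) (hr : 0 < r)
    (ha : a = orderOf (p : ZMod (q ^ n₂))) (hnd : ¬ a ∣ n₁) (hlt : n₁ < r * a) :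
    ∀ H : Subgroup (GaloisField p (r * a) ≃ᵃ[GaloisField p (r * a)] GaloisField p (r * a)),
      Nat.card H ≠ p ^ n₁ * q ^ n₂ := by
  intro H hcard
  have hp := (Fact.out : p.Prime)
  have hp2 : 2 ≤ p := hp.two_le
  have hra : r * a ≠ 0 := by omega
  set F := GaloisField p (r * a) with hFdef
  haveI : Finite (F ≃ᵃ[F] F) :=
    Finite.of_injective _ (AffineEquiv.toEquiv_injective (k := F) (P₁ := F) (P₂ := F))
  set f : (F ≃ᵃ[F] F) →* Fˣ := (aglLin F).toHomUnits with hfdef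
  set fH : H →* Fˣ := f.comp H.subtype with hfHdef
  set K := fH.ker with hKdef
  -- elements of the kernel are translations
  have hker : ∀ g : K, aglLin F (((g : H) : F ≃ᵃ[F] F)) = 1 := by
    intro g
    have h1 : fH (g : H) = 1 := g.2
    have h2 : (fH (g : H) : F) = 1 := by rw [h1]; rfl
    rwa [hfHdef, MonoidHom.comp_apply, hfdef, MonoidHom.coe_toHomUnits] at h2
  -- K is a p-group
  have hKp : IsPGroup p K := by
    intro g
    refine ⟨1, ?_⟩
    rw [pow_one]
    set t := ((g : H) : F ≃ᵃ[F] F) with htdef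
    have htp : t ^ p = 1 := by
      apply AffineEquiv.ext
      intro x
      rw [agl_ker_pow t (hker g) p x, nsmul_eq_mul, CharP.cast_eq_zero F p, zero_mul, add_zero]
      rfl
    apply Subtype.ext; apply Subtype.ext
    have : (((g ^ p : K) : H) : F ≃ᵃ[F] F) = t ^ p := by
      push_cast
      rfl
    rw [this, htp]; rfl
  obtain ⟨k, hk⟩ := hKp.exists_card_eq
  -- cardinality bookkeeping
  have hsplit : Nat.card H = Nat.card fH.range * Nat.card K := by
    rw [Subgroup.card_eq_card_quotient_mul_card_subgroup K]
    congr 1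
    exact Nat.card_congr (QuotientGroup.quotientKerEquivRange fH).toEquiv
  have hFcard : Nat.card F = p ^ (r * a) := GaloisField.card p (r * a) hra
  have hRdvd : Nat.card fH.range ∣ p ^ (r * a) - 1 := by
    have h1 := Subgroup.card_subgroup_dvd_card fH.range
    rwa [Nat.card_units, hFcard] at h1
  have hpow1 : 1 ≤ p ^ (r * a) := Nat.one_le_pow _ _ hp.pos
  have hcop : Nat.Coprime p (Nat.card fH.range) := by
    refine Nat.Coprime.coprime_dvd_right hRdvd ?_
    rw [Nat.Prime.coprime_iff_not_dvd hp]
    intro hdvd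
    have h2 : p ∣ p ^ (r * a) := dvd_pow_self p hra
    have h3 : p ∣ 1 := by
      have := Nat.dvd_sub h2 hdvd
      rwa [Nat.sub_sub_self hpow1] at this
    have := Nat.le_of_dvd one_pos h3
    omega
  have hcardeq : Nat.card fH.range * p ^ k = p ^ n₁ * q ^ n₂ := by
    rw [← hk, ← hsplit, hcard]
  have hpk : p ^ k = p ^ n₁ := by
    have h1 : p ^ n₁ ∣ p ^ k := by
      have hco : (p ^ n₁).Coprime (Nat.card fH.range) := (hcop.symm.pow_right n₁).symm
      refine hco.dvd_of_dvd_mul_right ⟨q ^ n₂, ?_⟩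
      rw [mul_comm]
      exact hcardeq
    have h2 : p ^ k ∣ p ^ n₁ := by
      have hcpq : (p ^ k).Coprime (q ^ n₂) :=
        Nat.Coprime.pow k n₂ ((Nat.coprime_primes hp hq).mpr hpq)
      refine hcpq.dvd_of_dvd_mul_right ⟨Nat.card fH.range, ?_⟩
      rw [← hcardeq, mul_comm]
    exact Nat.dvd_antisymm h2 h1
  have hKcard : Nat.card K = p ^ n₁ := by rw [hk, hpk]
  have hR : Nat.card fH.range = q ^ n₂ := by
    have hpos : 0 < p ^ n₁ := Nat.pow_pos hp.pos
    have := hcardeq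
    rw [hpk] at this
    exact Nat.eq_of_mul_eq_mul_left hpos (by rw [mul_comm (p ^ n₁)]; exact this)
  -- a generator of the image, of order q ^ n₂
  obtain ⟨ζ, hζ⟩ := IsCyclic.exists_ofOrder_eq_natCard (α := fH.range)
  set cu : Fˣ := (ζ : Fˣ) with hcu
  have hcuord : orderOf cu = q ^ n₂ := by
    rw [hcu, ← hR, ← hζ]
    exact orderOf_injective fH.range.subtype fH.range.subtype_injective ζ
  obtain ⟨h₀, hh₀⟩ : ∃ h₀ : H, fH h₀ = cu := ζ.2
  set c : F := (cu : F) with hc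
  have hc1 : aglLin F ((h₀ : H) : F ≃ᵃ[F] F) = c := by
    rw [hc, ← hh₀]
    rfl
  have hcord : orderOf c = q ^ n₂ := by rw [hc, orderOf_units, hcuord]
  -- the subfield generated by c
  set E : Subalgebra (ZMod p) F := Algebra.adjoin (ZMod p) {c} with hEdef
  have hcE : c ∈ E := Algebra.subset_adjoin rfl
  letI : Fintype F := Fintype.ofFinite F
  letI : Fintype E := Fintype.ofFinite E
  set m := Module.finrank (ZMod p) E with hm
  have hEcard : Fintype.card E = p ^ m := by
    rw [card_eq_pow_finrank (K := ZMod p) (V := E), ZMod.card]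
  letI : Field E := (Finite.isField_of_domain E).toField
  set cE : E := ⟨c, hcE⟩ with hcEdef
  have hcEne : cE ≠ 0 := by
    intro h
    exact cu.ne_zero (congrArg Subtype.val h)
  have hcEord : orderOf cE = q ^ n₂ := by
    have hinj : Function.Injective (E.val.toRingHom.toMonoidHom) := Subtype.val_injective
    have := orderOf_injective E.val.toRingHom.toMonoidHom hinj cE
    rw [← this]
    exact hcord
  have hdvdE : q ^ n₂ ∣ p ^ m - 1 := by
    have h1 := orderOf_dvd_natCard (Units.mk0 cE hcEne)
    rw [Nat.card_units, Nat.card_eq_fintype_card, hEcard] at h1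
    rwa [← orderOf_units, Units.val_mk0, hcEord] at h1
  have ham : a ∣ m := by
    have hQpos : 1 ≤ p ^ m := Nat.one_le_pow _ _ hp.pos
    have hpm1 : ((p : ZMod (q ^ n₂))) ^ m = 1 := by
      have h0 : ((p ^ m - 1 : ℕ) : ZMod (q ^ n₂)) = 0 :=
        (ZMod.natCast_eq_zero_iff _ _).mpr hdvdE
      have h1 : ((p ^ m : ℕ) : ZMod (q ^ n₂)) = 1 := by
        rw [show p ^ m = (p ^ m - 1) + 1 by omega, Nat.cast_add, h0, Nat.cast_one, zero_add]
      rw [← Nat.cast_pow]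
      exact h1
    rw [ha]
    exact orderOf_dvd_of_pow_eq_one hpm1
  -- the translation set of K, as an E-submodule
  letI : Algebra E F := RingHom.toAlgebra E.val.toRingHom
  have hsmul : ∀ (e : E) (x : F), e • x = (e : F) * x := fun e x => rfl
  set S : Set F := Set.range (fun g : K => (((g : H) : F ≃ᵃ[F] F)) 0) with hSdef
  have hzeroS : (0 : F) ∈ S := by
    refine ⟨1, ?_⟩
    show ((1 : F ≃ᵃ[F] F)) 0 = 0
    rfl
  have haddS : ∀ x ∈ S, ∀ y ∈ S, x + y ∈ S := by
    rintro x ⟨g₁, rfl⟩ y ⟨g₂, rfl⟩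
    refine ⟨g₁ * g₂, ?_⟩
    show (((g₁ : H) : F ≃ᵃ[F] F) * ((g₂ : H) : F ≃ᵃ[F] F)) 0 = _
    rw [AffineEquiv.mul_def, AffineEquiv.trans_apply,
      agl_ker_apply _ (hker g₁), agl_ker_apply _ (hker g₂)]
    ring
  have hnsmulS : ∀ (n : ℕ), ∀ x ∈ S, n • x ∈ S := by
    intro n
    induction n with
    | zero => intro x _; simpa using hzeroS
    | succ n ih =>
      intro x hx
      rw [succ_nsmul]
      exact haddS _ (ih x hx) _ hx
  have hmulcS : ∀ x ∈ S, c * x ∈ S := by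
    rintro x ⟨g, rfl⟩
    set t := ((g : H) : F ≃ᵃ[F] F) with htdef
    set g₀ := ((h₀ : H) : F ≃ᵃ[F] F) with hg₀def
    have hkmem : h₀ * (g : H) * h₀⁻¹ ∈ K := by
      have hg1 : fH (g : H) = 1 := g.2
      have : fH (h₀ * (g : H) * h₀⁻¹) = 1 := by
        rw [map_mul, map_mul, map_inv, hh₀, hg1, mul_one, mul_inv_cancel]
      exact this
    refine ⟨⟨h₀ * (g : H) * h₀⁻¹, hkmem⟩, ?_⟩
    have hcoe : (((⟨h₀ * (g : H) * h₀⁻¹, hkmem⟩ : K) : H) : F ≃ᵃ[F] F) = g₀ * t * g₀⁻¹ := rfl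
    show (((⟨h₀ * (g : H) * h₀⁻¹, hkmem⟩ : K) : H) : F ≃ᵃ[F] F) 0 = c * t 0
    rw [hcoe, agl_conj_zero _ _ (hker g), hg₀def, hc1]
  have hmulES : ∀ (e : E) (x : F), x ∈ S → (e : F) * x ∈ S := by
    rintro ⟨y, hy⟩ x hx
    induction hy using Algebra.adjoin_induction generalizing x with
    | mem z hz =>
      rcases hz with rfl
      exact hmulcS x hx
    | algebraMap r =>
      have hr : (algebraMap (ZMod p) F r) = ((r.val : ℕ) : F) := by
        conv_lhs => rw [← ZMod.natCast_zmod_val r]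
        rw [map_natCast]
      show algebraMap (ZMod p) F r * x ∈ S
      rw [hr, ← nsmul_eq_mul]
      exact hnsmulS _ x hx
    | add z w hz hw ihz ihw =>
      show (z + w) * x ∈ S
      rw [add_mul]
      exact haddS _ (ihz x hx) _ (ihw x hx)
    | mul z w hz hw ihz ihw =>
      show (z * w) * x ∈ S
      rw [mul_assoc]
      exact ihz _ (ihw x hx)
  set W : Submodule E F :=
    { carrier := S
      add_mem' := fun hx hy => haddS _ hx _ hy
      zero_mem' := hzeroS
      smul_mem' := fun e x hx => by rw [hsmul]; exact hmulES e x hx } with hWdef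
  letI : Fintype W := Fintype.ofFinite W
  -- |W| = |K| = p ^ n₁
  have hWK : Nat.card W = p ^ n₁ := by
    rw [← hKcard]
    symm
    apply Nat.card_congr
    refine Equiv.ofBijective (fun g : K => (⟨(((g : H) : F ≃ᵃ[F] F)) 0, ⟨g, rfl⟩⟩ : W)) ⟨?_, ?_⟩
    · intro g₁ g₂ hg
      have hval : (((g₁ : H) : F ≃ᵃ[F] F)) 0 = (((g₂ : H) : F ≃ᵃ[F] F)) 0 :=
        congrArg Subtype.val hg
      have : ((g₁ : H) : F ≃ᵃ[F] F) = ((g₂ : H) : F ≃ᵃ[F] F) := by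
        apply AffineEquiv.ext
        intro x
        rw [agl_ker_apply _ (hker g₁), agl_ker_apply _ (hker g₂), hval]
      exact Subtype.ext (Subtype.ext this)
    · rintro ⟨x, g, rfl⟩
      exact ⟨g, rfl⟩
  set d := Module.finrank E W with hd
  have hWcard : Fintype.card W = (p ^ m) ^ d := by
    rw [card_eq_pow_finrank (K := E) (V := W), hEcard]
  have hfinal : p ^ n₁ = p ^ (m * d) := by
    rw [← hWK, Nat.card_eq_fintype_card, hWcard, ← pow_mul]
  have hn₁md : n₁ = m * d := Nat.pow_right_injective hp2 hfinal
  exact hnd (ham.trans ⟨d, hn₁md.symm ▸ rfl⟩)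
end

section
/- The group AGL(1,9) × C5, of order 360, has no subgroup of order 60. -/
noncomputable section
namespace AGL19Aux

abbrev K : Type := GaloisField 3 2
abbrev A : Type := K ≃ᵃ[K] K

lemma apply_eq (f : A) (v : K) : f v = (f 1 - f 0) * v + f 0 := by
  have h : ∀ w : K, f w = f.linear w + f 0 := by
    intro w
    have h1 := congrFun (AffineMap.decomp (f : K →ᵃ[K] K)) w
    simpa using h1
  have h1 : f.linear v = v * f.linear 1 := by
    have := f.linear.map_smul v (1 : K)
    simpa [smul_eq_mul] using this
  have h2 : (f 1 - f 0) = f.linear 1 := by rw [h 1]; ring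
  rw [h v, h1, h2]; ring

lemma lin_ne_zero (f : A) : f 1 - f 0 ≠ 0 := by
  intro h
  rw [sub_eq_zero] at h
  exact one_ne_zero (f.injective h)

lemma mul_apply (f g : A) (v : K) : (f * g) v = f (g v) := rfl

def lam : A →* Kˣ where
  toFun f := Units.mk0 (f 1 - f 0) (lin_ne_zero f)
  map_one' := by
    ext
    show (1 : A) 1 - (1 : A) 0 = 1
    simp [AffineEquiv.one_def]
  map_mul' f g := by
    ext
    show (f * g) 1 - (f * g) 0 = (f 1 - f 0) * (g 1 - g 0)
    rw [mul_apply, mul_apply, apply_eq f (g 1), apply_eq f (g 0)]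
    ring

lemma lam_val (f : A) : ((lam f : Kˣ) : K) = f 1 - f 0 := rfl

lemma apply_eq' (f : A) (v : K) : f v = ((lam f : Kˣ) : K) * v + f 0 := apply_eq f v

def toProd (f : A) : Kˣ × K := (lam f, f 0)

lemma toProd_injective : Function.Injective toProd := by
  intro f g h
  have h1 : lam f = lam g := congrArg Prod.fst h
  have h2 : f 0 = g 0 := congrArg Prod.snd h
  ext v
  have hv := apply_eq' f v
  rw [h1, h2, ← apply_eq' g v] at hv
  exact hv

lemma toProd_surjective : Function.Surjective toProd := by
  intro ⟨u, c⟩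
  set g : A := (LinearEquiv.smulOfUnit u).toAffineEquiv.trans (AffineEquiv.constVAdd K K c)
    with hgdef
  have happ : ∀ v : K, g v = c + (u : K) * v := by
    intro v
    simp [hgdef, AffineEquiv.trans_apply, LinearEquiv.smulOfUnit, AffineEquiv.constVAdd,
      Units.smul_def, smul_eq_mul]
    rfl
  refine ⟨g, Prod.ext ?_ ?_⟩
  · show lam g = u
    ext
    rw [lam_val, happ 1, happ 0]
    ring
  · show g 0 = c
    rw [happ 0]; ring

lemma toProd_bijective : Function.Bijective toProd := ⟨toProd_injective, toProd_surjective⟩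

instance : Finite A := Finite.of_injective toProd toProd_injective

lemma card_K : Nat.card K = 9 := by
  simpa using GaloisField.card (p := 3) (n := 2) (by norm_num)

lemma card_Kunits : Nat.card Kˣ = 8 := by
  rw [Nat.card_units, card_K]

lemma card_A : Nat.card A = 72 := by
  rw [Nat.card_eq_of_bijective toProd toProd_bijective, Nat.card_prod, Nat.card_units, card_K]

end AGL19Aux

namespace AGL19Aux2
open AGL19Aux

lemma card_ker_mul_card_range {G N : Type*} [Group G] [Group N] (f : G →* N) :
    Nat.card G = Nat.card f.range * Nat.card f.ker := by
  rw [Subgroup.card_eq_card_quotient_mul_card_subgroup f.ker,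
    Nat.card_congr (QuotientGroup.quotientKerEquivRange f).toEquiv]

lemma ker_cube (f : A) (hf : lam f = 1) : f ^ 3 = 1 := by
  have hlin : f 1 - f 0 = 1 := by rw [← lam_val, hf]; rfl
  have happ : ∀ v, f v = v + f 0 := fun v => by rw [apply_eq f v, hlin]; ring
  have h30 : f 0 + (f 0 + f 0) = 0 := by
    have h3 : ((3 : ℕ) : K) = 0 := by exact_mod_cast CharP.cast_eq_zero K 3
    calc f 0 + (f 0 + f 0) = ((3 : ℕ) : K) * f 0 := by push_cast; ring
      _ = 0 := by rw [h3, zero_mul]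
  ext v
  show (f ^ 3) v = (1 : A) v
  have hp : f ^ 3 = f * f * f := by rw [pow_succ, pow_succ, pow_one]
  have h1 : (1 : A) v = v := rfl
  rw [hp, mul_apply, mul_apply, happ, happ, happ, h1]
  linear_combination h30

lemma no12 (B : Subgroup A) : Nat.card B ≠ 12 := by
  intro h12
  haveI : Fact (Nat.Prime 2) := ⟨by norm_num⟩
  haveI : Fact (Nat.Prime 3) := ⟨by norm_num⟩
  set lb : ↥B →* Kˣ := lam.comp B.subtype with hlb
  have hcard : (12 : ℕ) = Nat.card lb.range * Nat.card lb.ker := by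
    rw [← h12]; exact card_ker_mul_card_range lb
  have hker3 : ∀ t : lb.ker, orderOf t ∣ 3 := by
    intro t
    have h1 : lam ((t : ↥B) : A) = 1 := t.2
    have h2 : (((t : ↥B) : A)) ^ 3 = 1 := ker_cube _ h1
    have := orderOf_dvd_of_pow_eq_one h2
    rwa [Subgroup.orderOf_coe, Subgroup.orderOf_coe] at this
  have hkdvd : Nat.card lb.ker ∣ 12 := h12 ▸ Subgroup.card_subgroup_dvd_card lb.ker
  have hrdvd : Nat.card lb.range ∣ 8 := by
    have h := Subgroup.card_subgroup_dvd_card lb.range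
    rwa [card_Kunits] at h
  have hodd : ¬ (2 ∣ Nat.card lb.ker) := by
    intro h2
    haveI : Fintype lb.ker := Fintype.ofFinite _
    rw [Nat.card_eq_fintype_card] at h2
    obtain ⟨g, hg⟩ := exists_prime_orderOf_dvd_card 2 h2
    have h3 := hker3 g
    rw [hg] at h3
    norm_num at h3
  have hble : Nat.card lb.range ≤ 8 := Nat.le_of_dvd (by norm_num) hrdvd
  have hale : Nat.card lb.ker ≤ 12 := Nat.le_of_dvd (by norm_num) hkdvd
  have hapos : 0 < Nat.card lb.ker := Nat.card_pos
  have ha3 : Nat.card lb.ker = 3 := by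
    set a := Nat.card lb.ker
    interval_cases a <;> first
      | rfl
      | omega
      | (exfalso; norm_num at hkdvd hodd)
      | (exfalso; norm_num at hkdvd hodd; omega)
  have hb4 : Nat.card lb.range = 4 := by rw [ha3] at hcard; omega
  -- a generator of the image, of order 4
  obtain ⟨u', hu'⟩ := IsCyclic.exists_ofOrder_eq_natCard (α := ↥lb.range)
  rw [hb4] at hu'
  obtain ⟨x, hx⟩ := u'.2
  have hox : orderOf (lb x) = 4 := by
    rw [hx, Subgroup.orderOf_coe, hu']
  set w : K := ((lb x : Kˣ) : K) with hw
  have hw2 : w ^ 2 = -1 := by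
    have h4 : (lb x) ^ 4 = 1 := by rw [← hox]; exact pow_orderOf_eq_one _
    have hsq : (w ^ 2) ^ 2 = 1 := by
      have hv := congrArg (Units.val) h4
      push_cast at hv
      rw [← pow_mul]
      exact_mod_cast hv
    have hne : w ^ 2 ≠ 1 := by
      intro h1
      have h2 : (lb x) ^ 2 = 1 := by
        ext; push_cast; exact h1
      have h3 := orderOf_dvd_of_pow_eq_one h2
      rw [hox] at h3
      norm_num at h3
    have hz : (w ^ 2 - 1) * (w ^ 2 + 1) = 0 := by ring_nf; linear_combination hsq
    rcases mul_eq_zero.mp hz with h | h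
    · exact absurd (sub_eq_zero.mp h) hne
    · exact eq_neg_of_add_eq_zero_left h
  -- an element of order 3 in the kernel
  have h3dvd : 3 ∣ Nat.card lb.ker := by rw [ha3]
  haveI : Fintype lb.ker := Fintype.ofFinite _
  rw [Nat.card_eq_fintype_card] at h3dvd ha3
  obtain ⟨t, ht⟩ := exists_prime_orderOf_dvd_card 3 h3dvd
  have ht1 : t ≠ 1 := by
    intro h; rw [h, orderOf_one] at ht; norm_num at ht
  -- conjugate of t lies in the kernel
  have hy : x * ((t : ↥B)) * x⁻¹ ∈ lb.ker := by
    have htk : lb (t : ↥B) = 1 := t.2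
    simp [MonoidHom.mem_ker, map_mul, htk]
  set s : lb.ker := ⟨x * ((t : ↥B)) * x⁻¹, hy⟩ with hs
  have hs1 : s ≠ 1 := by
    intro h
    apply ht1
    have h' : x * ((t : ↥B)) * x⁻¹ = 1 := congrArg Subtype.val h
    have : (t : ↥B) = 1 := by
      have := congrArg (fun z => x⁻¹ * z * x) h'
      simpa [mul_assoc] using this
    exact Subtype.ext this
  rw [← Nat.card_eq_fintype_card] at ha3
  obtain ⟨m, hm⟩ := Subgroup.mem_zpowers_iff.mp
    (mem_zpowers_of_prime_card (p := 3) ha3 ht1 (g' := s))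
  have hm3 : ¬ ((3 : ℤ) ∣ m) := by
    intro hdvd
    apply hs1
    rw [← hm]
    have : ((orderOf t : ℤ)) ∣ m := by rw [ht]; exact_mod_cast hdvd
    exact (orderOf_dvd_iff_zpow_eq_one).mp this
  have hm21 : (3 : ℤ) ∣ m * m - 1 := by
    have h3 : m % 3 = 1 ∨ m % 3 = 2 := by omega
    rcases h3 with h | h
    · obtain ⟨q, rfl⟩ : ∃ q, m = 3 * q + 1 := ⟨m / 3, by omega⟩
      exact ⟨3 * q * q + 2 * q, by ring⟩
    · obtain ⟨q, rfl⟩ : ∃ q, m = 3 * q + 2 := ⟨m / 3, by omega⟩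
      exact ⟨3 * q * q + 4 * q + 1, by ring⟩
  -- in B : coe of hm
  have hmB : ((t : ↥B)) ^ m = x * ((t : ↥B)) * x⁻¹ := by
    have := congrArg (fun z : lb.ker => (z : ↥B)) hm
    push_cast at this
    exact this
  have htB3 : orderOf ((t : ↥B)) = 3 := by rw [Subgroup.orderOf_coe, ht]
  have hconj2 : x * (x * ((t : ↥B)) * x⁻¹) * x⁻¹ = ((t : ↥B)) ^ (m * m) := by
    calc x * (x * ((t : ↥B)) * x⁻¹) * x⁻¹ = x * (((t : ↥B)) ^ m) * x⁻¹ := by rw [hmB]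
      _ = (x * ((t : ↥B)) * x⁻¹) ^ m := (conj_zpow).symm
      _ = (((t : ↥B)) ^ m) ^ m := by rw [hmB]
      _ = ((t : ↥B)) ^ (m * m) := by rw [← zpow_mul]
  have hpow : ((t : ↥B)) ^ (m * m) = (t : ↥B) := by
    have h1 : ((t : ↥B)) ^ (m * m - 1) = 1 := by
      apply (orderOf_dvd_iff_zpow_eq_one).mp
      rw [htB3]; exact_mod_cast hm21
    calc ((t : ↥B)) ^ (m * m) = ((t : ↥B)) ^ (m * m - 1) * ((t : ↥B)) ^ (1 : ℤ) := by
          rw [← zpow_add]; ring_nf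
      _ = (t : ↥B) := by rw [h1, one_mul, zpow_one]
  have hcomm : x ^ 2 * ((t : ↥B)) = ((t : ↥B)) * x ^ 2 := by
    have h := hconj2.trans hpow
    have h2 := congrArg (fun z => z * x * x) h
    simp only [mul_assoc] at h2 ⊢
    group at h2 ⊢
    exact h2
  -- push to A
  have hcommA : ((x : A)) ^ 2 * (((t : ↥B) : A)) = (((t : ↥B) : A)) * ((x : A)) ^ 2 := by
    have := congrArg (fun z : ↥B => (z : A)) hcomm
    push_cast at this
    exact this
  set X : A := (x : A) with hX
  set tA : A := ((t : ↥B) : A) with htA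
  have htlam : lam tA = 1 := t.2
  have htlin : tA 1 - tA 0 = 1 := by rw [← lam_val, htlam]; rfl
  have htapp : ∀ v, tA v = v + tA 0 := fun v => by rw [apply_eq tA v, htlin]; ring
  have hXlam : ((lam (X ^ 2) : Kˣ) : K) = -1 := by
    have : lam (X ^ 2) = (lb x) ^ 2 := by rw [map_pow]; rfl
    rw [this]
    push_cast
    exact hw2
  have hXapp : ∀ v, (X ^ 2) v = -v + (X ^ 2) 0 := fun v => by
    rw [apply_eq' (X ^ 2) v, hXlam]; ring
  have hb0 : tA 0 ≠ 0 := by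
    intro h0
    apply ht1
    have : tA = 1 := by
      ext v
      show tA v = (1 : A) v
      rw [htapp v, h0, add_zero]
      rfl
    exact Subtype.ext (Subtype.ext this)
  have heval := congrArg (fun f : A => f (tA 0)) hcommA
  simp only [mul_apply] at heval
  rw [htapp (tA 0)] at heval
  rw [hXapp (tA 0 + tA 0), hXapp (tA 0)] at heval
  rw [htapp (-tA 0 + (X ^ 2) 0)] at heval
  have h2b : tA 0 + tA 0 = 0 := by linear_combination -heval
  have h2z : ((2 : ℕ) : K) ≠ 0 := by
    intro h
    rw [CharP.cast_eq_zero_iff K 3 2] at h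
    norm_num at h
  apply hb0
  have h2b' : ((2 : ℕ) : K) * tA 0 = 0 := by push_cast; linear_combination h2b
  rcases mul_eq_zero.mp h2b' with h | h
  · exact absurd h h2z
  · exact h

end AGL19Aux2

open AGL19Aux AGL19Aux2 in
/-- AGL(1,9) × C₅ has order 360 and no subgroup of order 60. -/
theorem agl19_times_c5_no_subgroup_order_sixty :
    Nat.card ((GaloisField 3 2 ≃ᵃ[GaloisField 3 2] GaloisField 3 2) ×
        Multiplicative (ZMod 5)) = 360 ∧
    ∀ H : Subgroup ((GaloisField 3 2 ≃ᵃ[GaloisField 3 2] GaloisField 3 2) ×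
        Multiplicative (ZMod 5)), Nat.card H ≠ 60 := by
  have hC5card : Nat.card (Multiplicative (ZMod 5)) = 5 := by
    simp [Nat.card_eq_fintype_card]
  constructor
  · rw [Nat.card_prod, hC5card]
    rw [show Nat.card (GaloisField 3 2 ≃ᵃ[GaloisField 3 2] GaloisField 3 2) = 72 from card_A]
  · intro H h60
    set C5 := Multiplicative (ZMod 5) with hC5
    set p2 : ↥H →* C5 := (MonoidHom.snd A C5).comp H.subtype with hp2
    have hcard : (60 : ℕ) = Nat.card p2.range * Nat.card p2.ker := by
      rw [← h60]; exact card_ker_mul_card_range p2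
    have h5 : Nat.card p2.range ∣ 5 := by
      have h := Subgroup.card_subgroup_dvd_card p2.range
      rwa [hC5card] at h
    set q : ↥p2.ker →* A := (MonoidHom.fst A C5).comp (H.subtype.comp p2.ker.subtype) with hq
    have hqinj : Function.Injective q := by
      intro a b hab
      have ha2 : p2 (a : ↥H) = 1 := a.2
      have hb2 : p2 (b : ↥H) = 1 := b.2
      have h1 : ((a : ↥H) : A × C5).1 = ((b : ↥H) : A × C5).1 := hab
      have h2 : ((a : ↥H) : A × C5).2 = ((b : ↥H) : A × C5).2 := by
        have ha2' : ((a : ↥H) : A × C5).2 = 1 := ha2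
        have hb2' : ((b : ↥H) : A × C5).2 = 1 := hb2
        rw [ha2', hb2']
      exact Subtype.ext (Subtype.ext (Prod.ext h1 h2))
    have hrange_card : Nat.card q.range = Nat.card p2.ker :=
      (Nat.card_congr (MonoidHom.ofInjective hqinj).toEquiv).symm
    have h72 : Nat.card q.range ∣ 72 := by
      rw [← card_A]; exact Subgroup.card_subgroup_dvd_card _
    have h15 : Nat.card p2.range = 1 ∨ Nat.card p2.range = 5 :=
      (Nat.prime_five.eq_one_or_self_of_dvd _ h5)
    rcases h15 with h | h
    · rw [h, one_mul] at hcard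
      rw [hrange_card, ← hcard] at h72
      norm_num at h72
    · rw [h] at hcard
      have hk : Nat.card p2.ker = 12 := by omega
      exact no12 q.range (by rw [hrange_card, hk])


end
end

section
/- If N is a normal subgroup of a finite group G, then d_CLT(G/N) ≤ (τ(|G|)/τ(|G|/|N|)) · d_CLT(G). -/
/-- Number of divisors d of |G| realized as the order of a subgroup of G. -/
noncomputable def numRealizedDivisors (G : Type*) [Group G] : ℕ :=
  Nat.card {d : ℕ // d ∣ Nat.card G ∧ ∃ H : Subgroup G, Nat.card H = d}

/-- The CLT-degree of a finite group G. -/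
noncomputable def dCLT (G : Type*) [Group G] : ℚ :=
  (numRealizedDivisors G : ℚ) / ((Nat.card G).divisors.card : ℚ)

lemma card_comap_mk' {G : Type*} [Group G] (N : Subgroup G) [N.Normal]
    (H : Subgroup (G ⧸ N)) :
    Nat.card (Subgroup.comap (QuotientGroup.mk' N) H) = Nat.card N * Nat.card H := by
  have : (Subgroup.comap (QuotientGroup.mk' N) H : Set G)
      = QuotientGroup.mk ⁻¹' (H : Set (G ⧸ N)) := rfl
  calc Nat.card (Subgroup.comap (QuotientGroup.mk' N) H)
      = Nat.card (QuotientGroup.mk ⁻¹' (H : Set (G ⧸ N))) := by rw [← this]; rfl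
    _ = Nat.card (N × (H : Set (G ⧸ N))) :=
        Nat.card_congr (QuotientGroup.preimageMkEquivSubgroupProdSet N _)
    _ = Nat.card N * Nat.card H := by rw [Nat.card_prod]; rfl

lemma numRealized_quotient_le (G : Type*) [Group G] [Finite G] (N : Subgroup G) [N.Normal] :
    numRealizedDivisors (G ⧸ N) ≤ numRealizedDivisors G := by
  have hGpos : 0 < Nat.card G := Nat.card_pos
  haveI : Finite {d : ℕ // d ∣ Nat.card G ∧ ∃ H : Subgroup G, Nat.card H = d} := by
    apply Set.Finite.to_subtype
    exact Set.Finite.subset (Set.finite_le_nat (Nat.card G))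
      (fun d hd => Nat.le_of_dvd hGpos hd.1)
  have hNpos : 0 < Nat.card N := Nat.card_pos
  have hlag : Nat.card G = Nat.card (G ⧸ N) * Nat.card N :=
    Subgroup.card_eq_card_quotient_mul_card_subgroup N
  apply Nat.card_le_card_of_injective
    (fun x => (⟨x.1 * Nat.card N, by
      obtain ⟨d, hd, H, hH⟩ := x
      exact ⟨hlag ▸ mul_dvd_mul_right hd _,
        Subgroup.comap (QuotientGroup.mk' N) H, by rw [card_comap_mk', hH, mul_comm]⟩⟩ :
      {d : ℕ // d ∣ Nat.card G ∧ ∃ H : Subgroup G, Nat.card H = d}))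
  intro a b hab
  have := congrArg Subtype.val hab
  simp only at this
  exact Subtype.ext (Nat.eq_of_mul_eq_mul_right hNpos this)

/-- For a normal subgroup N of G, dCLT(G/N) ≤ (τ(|G|)/τ(|G|/|N|)) · dCLT(G). -/
theorem dCLT_quotient_le (G : Type*) [Group G] [Finite G] (N : Subgroup G) [N.Normal] :
    dCLT (G ⧸ N) ≤
      (((Nat.card G).divisors.card : ℚ) / ((Nat.card G / Nat.card N).divisors.card : ℚ)) *
        dCLT G := by
  have hGpos : 0 < Nat.card G := Nat.card_pos
  have hNpos : 0 < Nat.card N := Nat.card_pos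
  have hlag : Nat.card G = Nat.card (G ⧸ N) * Nat.card N :=
    Subgroup.card_eq_card_quotient_mul_card_subgroup N
  have hq : Nat.card G / Nat.card N = Nat.card (G ⧸ N) := by
    rw [hlag, Nat.mul_div_cancel _ hNpos]
  have hQpos : 0 < Nat.card (G ⧸ N) := Nat.card_pos
  have ht : (0 : ℚ) < ((Nat.card G).divisors.card : ℚ) := by
    exact_mod_cast Finset.card_pos.mpr ⟨1, Nat.one_mem_divisors.2 hGpos.ne'⟩
  have hs : (0 : ℚ) < ((Nat.card (G ⧸ N)).divisors.card : ℚ) := by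
    exact_mod_cast Finset.card_pos.mpr ⟨1, Nat.one_mem_divisors.2 hQpos.ne'⟩
  rw [hq, dCLT, dCLT]
  rw [div_mul_div_comm, mul_comm ((Nat.card G).divisors.card : ℚ),
    mul_div_mul_right _ _ ht.ne']
  gcongr
  exact_mod_cast numRealized_quotient_le G N
end

section
/- Let p and q be primes with q odd and q dividing p + 1, and let G = (C_p^2 ⋊ C_q) × C_q^n for n ≥ 0, where C_q acts on C_p^2 fixed-point-freely (i.e., irreducibly). Then d_CLT(G) = (3n+5)/(3n+6). -/
open SemidirectProduct

namespace DCLTAux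

/-! ### Generic helpers -/

lemma card_dvd_of_le {G : Type*} [Group G] [Finite G] {H K : Subgroup G} (hle : H ≤ K) :
    Nat.card H ∣ Nat.card K := by
  have := Subgroup.card_subgroup_dvd_card (H.subgroupOf K)
  rwa [Nat.card_congr (Subgroup.subgroupOfEquivOfLe hle).toEquiv] at this

lemma card_ker_range {G T : Type*} [Group G] [Group T] [Finite G] (f : G →* T) :
    Nat.card G = Nat.card f.ker * Nat.card f.range := by
  have h1 := Subgroup.card_eq_card_quotient_mul_card_subgroup f.ker
  rw [Nat.card_congr (QuotientGroup.quotientKerEquivRange f).toEquiv] at h1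
  rw [h1, mul_comm]

lemma conj_pow_formula {G : Type*} [Group G] (x y : G) (j : ℤ) (hj : y ^ j = x * y * x⁻¹) :
    ∀ k : ℕ, x ^ k * y * (x ^ k)⁻¹ = y ^ (j ^ k) := by
  intro k
  induction k with
  | zero => simp
  | succ k ih =>
    have : x ^ (k+1) * y * (x ^ (k+1))⁻¹ = x * (x ^ k * y * (x ^ k)⁻¹) * x⁻¹ := by
      rw [pow_succ']; group
    rw [this, ih, ← conj_zpow, ← hj, ← zpow_mul, ← pow_succ']

lemma card_prod_subgroup {G N : Type*} [Group G] [Group N] (H : Subgroup G) (K : Subgroup N) :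
    Nat.card (H.prod K) = Nat.card H * Nat.card K := by
  rw [Nat.card_congr (H.prodEquiv K).toEquiv, Nat.card_prod]

lemma card_map_of_injective {G N : Type*} [Group G] [Group N] (H : Subgroup G) (f : G →* N)
    (hf : Function.Injective f) : Nat.card (H.map f) = Nat.card H :=
  (Nat.card_congr (H.equivMapOfInjective f hf).toEquiv).symm

lemma card_range_of_injective {G N : Type*} [Group G] [Group N] (f : G →* N)
    (hf : Function.Injective f) : Nat.card f.range = Nat.card G :=
  (Nat.card_congr (MonoidHom.ofInjective hf).toEquiv).symm

def sdEquiv {N G : Type*} [Group N] [Group G] (φ : G →* MulAut N) : (N ⋊[φ] G) ≃ N × G where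
  toFun x := (x.left, x.right)
  invFun x := ⟨x.1, x.2⟩
  left_inv _ := rfl
  right_inv _ := rfl

instance sdFinite {N G : Type*} [Group N] [Group G] [Finite N] [Finite G] (φ : G →* MulAut N) :
    Finite (N ⋊[φ] G) := Finite.of_equiv _ (sdEquiv φ).symm

lemma conj_inl {N G : Type*} [Group N] [Group G] {φ : G →* MulAut N} (x : N ⋊[φ] G) (m : N) :
    x * SemidirectProduct.inl m * x⁻¹
      = SemidirectProduct.inl (x.left * φ x.right m * x.left⁻¹) := by
  ext <;>
    simp [SemidirectProduct.mul_left, SemidirectProduct.mul_right,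
      SemidirectProduct.inv_left, SemidirectProduct.inv_right, mul_assoc]

/-! ### Arithmetic helpers -/

variable {p q n : ℕ}

lemma p_ne_q (hp : p.Prime) (hq : q.Prime) (hdvd : q ∣ p + 1) : p ≠ q := by
  rintro rfl
  have h1 : p ∣ 1 := (Nat.dvd_add_right dvd_rfl).mp hdvd
  exact hp.one_lt.ne' (Nat.dvd_one.mp h1)

lemma q_not_dvd_sub (hp : p.Prime) (hq : q.Prime) (hqodd : Odd q) (hdvd : q ∣ p + 1) :
    ¬ q ∣ p - 1 := by
  intro h
  have h2 : q ∣ 2 := by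
    have h3 : (p + 1) - (p - 1) = 2 := by have := hp.one_lt; omega
    exact h3 ▸ Nat.dvd_sub hdvd h
  have : q = 2 := (Nat.prime_dvd_prime_iff_eq hq Nat.prime_two).mp h2
  exact (Nat.not_odd_iff_even.mpr (this ▸ even_two)) hqodd

lemma unit_eq_one (hp : p.Prime) (hq : q.Prime) (hqodd : Odd q) (hdvd : q ∣ p + 1)
    (u : ZMod p) (hu : u ^ (q ^ (n+1)) = 1) : u = 1 := by
  haveI : Fact p.Prime := ⟨hp⟩
  have hu0 : u ≠ 0 := by
    rintro rfl
    rw [zero_pow (pow_ne_zero _ hq.ne_zero)] at hu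
    exact zero_ne_one hu
  have h1 : orderOf u ∣ q ^ (n+1) := orderOf_dvd_of_pow_eq_one hu
  have h2 : orderOf u ∣ p - 1 :=
    orderOf_dvd_of_pow_eq_one (ZMod.pow_card_sub_one_eq_one hu0)
  have hco : Nat.Coprime (q ^ (n+1)) (p - 1) :=
    Nat.Coprime.pow_left _ (hq.coprime_iff_not_dvd.mpr (q_not_dvd_sub hp hq hqodd hdvd))
  have h4 : orderOf u ∣ 1 := hco ▸ Nat.dvd_gcd h1 h2
  exact orderOf_eq_one_iff.mp (Nat.dvd_one.mp h4)

/-! ### The specific group -/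

section
variable [NeZero p] [NeZero q]
  (φ : Multiplicative (ZMod q) →* MulAut (Multiplicative (ZMod p × ZMod p)))

local notation "SD" => Multiplicative (ZMod p × ZMod p) ⋊[φ] Multiplicative (ZMod q)

lemma cardG : Nat.card (SD × Multiplicative (Fin n → ZMod q)) = p^2 * q^(n+1) := by
  rw [Nat.card_prod, Nat.card_congr (sdEquiv φ), Nat.card_prod]
  simp [Nat.card_eq_fintype_card, ZMod.card, Fintype.card_fun]
  ring

/-- the projection killing `C_p^2` -/
def ρ : (SD × Multiplicative (Fin n → ZMod q)) →*
    Multiplicative (ZMod q) × Multiplicative (Fin n → ZMod q) :=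
  MonoidHom.prodMap rightHom (MonoidHom.id _)

omit [NeZero p] [NeZero q] in
lemma ρ_surj : Function.Surjective (ρ φ (n := n)) := by
  rintro ⟨c, v⟩
  exact ⟨(inr c, v), rfl⟩

lemma card_target : Nat.card (Multiplicative (ZMod q) × Multiplicative (Fin n → ZMod q))
    = q^(n+1) := by
  rw [Nat.card_prod]
  simp [Nat.card_eq_fintype_card, ZMod.card, Fintype.card_fun]
  ring

lemma card_ker_ρ : Nat.card (ρ φ (n := n)).ker = p^2 := by
  have h1 := Subgroup.card_eq_card_quotient_mul_card_subgroup (ρ φ (n := n)).ker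
  rw [cardG φ] at h1
  have h2 : Nat.card ((SD × Multiplicative (Fin n → ZMod q)) ⧸ (ρ φ (n := n)).ker)
      = q^(n+1) := by
    rw [Nat.card_congr (QuotientGroup.quotientKerEquivRange _).toEquiv,
      MonoidHom.range_eq_top.mpr (ρ_surj φ), Nat.card_congr Subgroup.topEquiv.toEquiv, card_target]
  rw [h2, mul_comm (p^2)] at h1
  exact (Nat.eq_of_mul_eq_mul_left (pow_pos (Nat.pos_of_ne_zero (NeZero.ne q)) _) h1.symm)

/-! ### Nonexistence of a subgroup of order `p * q^(n+1)` -/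

lemma no_subgroup (hp : p.Prime) (hq : q.Prime) (hqodd : Odd q) (hdvd : q ∣ p + 1)
    (hfree : ∀ g : Multiplicative (ZMod q), g ≠ 1 →
      ∀ x : Multiplicative (ZMod p × ZMod p), φ g x = x → x = 1)
    (H : Subgroup (SD × Multiplicative (Fin n → ZMod q))) :
    Nat.card H ≠ p * q ^ (n+1) := by
  intro hH
  haveI : Fact p.Prime := ⟨hp⟩
  set Q1 : ℕ := q ^ (n+1) with hQ1
  have hQ1pos : 0 < Q1 := pow_pos hq.pos _
  -- the subgroup M = H ⊓ ker ρ has order p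
  set M : Subgroup (SD × Multiplicative (Fin n → ZMod q)) := H ⊓ (ρ φ).ker with hMdef
  have hMH : Nat.card M ∣ p * Q1 := hH ▸ card_dvd_of_le inf_le_left
  have hMK : Nat.card M ∣ p ^ 2 := card_ker_ρ φ ▸ card_dvd_of_le inf_le_right
  have hMp : Nat.card M ∣ p := by
    obtain ⟨a, ha2, hae⟩ := (Nat.dvd_prime_pow hp).mp hMK
    interval_cases a
    · rw [hae, pow_zero]; exact one_dvd _
    · rw [hae, pow_one]
    · exfalso
      rw [hae] at hMH
      have h5 : p * p ∣ p * Q1 := by rwa [← pow_two]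
      have hpQ : p ∣ Q1 := (mul_dvd_mul_iff_left (show p ≠ 0 from hp.ne_zero)).mp h5
      have h6 : p ∣ q := hp.dvd_of_dvd_pow hpQ
      exact p_ne_q hp hq hdvd ((Nat.prime_dvd_prime_iff_eq hp hq).mp h6)
  -- the restriction of ρ to H
  set f := (ρ φ (n := n)).comp H.subtype with hfdef
  have hkerM : Nat.card f.ker = Nat.card M := by
    have h : f.ker = (H ⊓ (ρ φ).ker).subgroupOf H := by
      rw [Subgroup.inf_subgroupOf_left]; rfl
    rw [h, Nat.card_congr (Subgroup.subgroupOfEquivOfLe inf_le_left).toEquiv]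
  have hcards : Nat.card M * Nat.card f.range = p * Q1 := by
    have := card_ker_range f
    rw [hkerM, hH] at this
    exact this.symm
  have hrQ : Nat.card f.range ∣ Q1 := by
    have h := Subgroup.card_subgroup_dvd_card f.range
    rwa [card_target (q := q) (n := n)] at h
  -- conclude : card M = p and f is surjective
  obtain ⟨m', hm'⟩ := hMp
  obtain ⟨r', hr'⟩ := hrQ
  have hmr : m' * r' = 1 := by
    have h7 : (p * Q1) * (m' * r') = (p * Q1) * 1 := by
      rw [mul_one]
      calc (p * Q1) * (m' * r') = (Nat.card M * m') * (Nat.card f.range * r') := by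
            rw [← hcards]; ring
        _ = p * Q1 := by rw [← hm', ← hr']
    exact Nat.eq_of_mul_eq_mul_left (Nat.mul_pos hp.pos hQ1pos) h7
  have hMcard : Nat.card M = p := by
    have h13 : m' = 1 := Nat.eq_one_of_mul_eq_one_right hmr
    rw [h13, mul_one] at hm'
    exact hm'.symm
  have hrange : Nat.card f.range = Q1 := by
    have h13 : r' = 1 := Nat.eq_one_of_mul_eq_one_left hmr
    rw [h13, mul_one] at hr'
    exact hr'.symm
  have hfsurj : Function.Surjective f := by
    rw [← MonoidHom.range_eq_top]
    refine Subgroup.eq_of_le_of_card_ge le_top (le_of_eq ?_)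
    rw [hrange]
    exact (Nat.card_congr Subgroup.topEquiv.toEquiv).trans (card_target (q := q) (n := n))
  -- find y of order p in M
  haveI : Fintype M := Fintype.ofFinite _
  obtain ⟨y₀, hy₀⟩ := exists_prime_orderOf_dvd_card (G := M) p
    (by rw [Fintype.card_eq_nat_card]; rw [hMcard])
  set y : SD × Multiplicative (Fin n → ZMod q) := (y₀ : SD × Multiplicative (Fin n → ZMod q))
    with hydef
  have horder : orderOf y = p := by
    exact (Subgroup.orderOf_coe y₀).trans hy₀
  have hyM : y ∈ M := y₀.2
  have hyH : y ∈ H := (Subgroup.mem_inf.mp hyM).1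
  have hyker : ρ φ y = 1 := (Subgroup.mem_inf.mp hyM).2
  have hzp : Subgroup.zpowers y = M := by
    refine Subgroup.eq_of_le_of_card_ge (Subgroup.zpowers_le.mpr hyM) (le_of_eq ?_)
    rw [Nat.card_zpowers, horder]
    exact hMcard
  -- find x in H with nontrivial image in C_q and q-power order
  obtain ⟨x₀, hx₀⟩ := hfsurj (Multiplicative.ofAdd (1 : ZMod q), 1)
  set x : SD × Multiplicative (Fin n → ZMod q) :=
    ((x₀ : SD × Multiplicative (Fin n → ZMod q))) ^ (p * p) with hxdef
  have hxH : x ∈ H := H.pow_mem x₀.2 _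
  have hρx : ρ φ x = (Multiplicative.ofAdd (1 : ZMod q), 1) ^ (p * p) := by
    rw [hxdef, map_pow]
    exact congrArg (· ^ (p*p)) hx₀
  have hc : (ρ φ x).1 ≠ 1 := by
    rw [hρx]
    intro hcon
    have h8 : ((p * p : ℕ) : ZMod q) = 0 := by
      have := congrArg Multiplicative.toAdd hcon
      simpa [Prod.pow_fst, ← ofAdd_nsmul, nsmul_eq_mul] using this
    have h9 : q ∣ p * p := (ZMod.natCast_eq_zero_iff _ _).mp h8
    have h10 : q ∣ p := (Nat.Prime.dvd_mul hq).mp h9 |>.elim id id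
    exact p_ne_q hp hq hdvd ((Nat.prime_dvd_prime_iff_eq hq hp).mp h10).symm
  have hxQ : x ^ Q1 = 1 := by
    have h11 : orderOf (x₀ : SD × Multiplicative (Fin n → ZMod q)) ∣ p * Q1 := by
      rw [Subgroup.orderOf_coe, ← hH]
      exact orderOf_dvd_natCard x₀
    have h12 : (x₀ : SD × Multiplicative (Fin n → ZMod q)) ^ (p * Q1) = 1 :=
      orderOf_dvd_iff_pow_eq_one.mp h11
    rw [hxdef, ← pow_mul]
    have : p * p * Q1 = (p * Q1) * p := by ring
    rw [this, pow_mul, h12, one_pow]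
  -- conjugation stabilizes M = zpowers y
  have hconj : x * y * x⁻¹ ∈ Subgroup.zpowers y := by
    rw [hzp]
    refine Subgroup.mem_inf.mpr ⟨H.mul_mem (H.mul_mem hxH hyH) (H.inv_mem hxH), ?_⟩
    show ρ φ (x * y * x⁻¹) = 1
    rw [map_mul, map_mul, map_inv, hyker, mul_one, mul_inv_cancel]
  obtain ⟨j, hj⟩ := Subgroup.mem_zpowers_iff.mp hconj
  -- deduce x and y commute
  have hyQ : y = y ^ (j ^ Q1) := by
    have := conj_pow_formula x y j hj Q1
    rw [hxQ] at this
    simpa using this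
  have hz1 : y ^ ((j ^ Q1 - 1 : ℤ)) = 1 := by
    rw [zpow_sub, ← hyQ, zpow_one, mul_inv_cancel]
  have hdvd1 : (p : ℤ) ∣ j ^ Q1 - 1 := by
    have h15 := orderOf_dvd_iff_zpow_eq_one.mpr hz1
    rwa [horder] at h15
  have hu : ((j : ZMod p)) ^ Q1 = 1 := by
    have h16 : ((j ^ Q1 - 1 : ℤ) : ZMod p) = 0 :=
      (ZMod.intCast_zmod_eq_zero_iff_dvd _ p).mpr hdvd1
    push_cast at h16
    rwa [sub_eq_zero] at h16
  have hu1 : ((j : ZMod p)) = 1 := unit_eq_one hp hq hqodd hdvd _ (hQ1 ▸ hu)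
  have hdvd2 : (p : ℤ) ∣ j - 1 := by
    have h17 : ((j - 1 : ℤ) : ZMod p) = 0 := by push_cast; rw [hu1]; ring
    exact (ZMod.intCast_zmod_eq_zero_iff_dvd _ p).mp h17
  have hcomm : x * y * x⁻¹ = y := by
    rw [← hj]
    have h18 : y ^ ((j - 1 : ℤ)) = 1 :=
      orderOf_dvd_iff_zpow_eq_one.mp (by rwa [horder])
    calc y ^ j = y ^ ((j - 1 : ℤ)) * y ^ (1 : ℤ) := by rw [← zpow_add]; norm_num
      _ = y := by rw [h18, one_mul, zpow_one]
  -- extract components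
  have hy2 : y.2 = 1 := congrArg Prod.snd hyker
  have hcr : y.1.right = 1 := congrArg Prod.fst hyker
  have hxc : x.1.right ≠ 1 := hc
  have hy1eq : y.1 = SemidirectProduct.inl y.1.left := by
    ext1
    · rfl
    · simp [hcr]
  have h19 : x.1 * y.1 * x.1⁻¹ = y.1 := by
    have := congrArg Prod.fst hcomm
    simpa using this
  rw [hy1eq, conj_inl] at h19
  have h20 : x.1.left * φ x.1.right y.1.left * x.1.left⁻¹ = y.1.left := by
    have := congrArg SemidirectProduct.left h19
    simpa using this
  have hfix : φ x.1.right y.1.left = y.1.left := by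
    rw [mul_comm x.1.left, mul_assoc, mul_inv_cancel, mul_one] at h20
    exact h20
  have hm1 : y.1.left = 1 := hfree _ hxc _ hfix
  have hyone : y = 1 := by
    refine Prod.ext ?_ hy2
    rw [hy1eq, hm1]
    exact map_one _
  rw [hyone, orderOf_one] at horder
  exact hp.one_lt.ne' horder.symm

/-! ### Existence of subgroups -/

lemma exists_W (b : ℕ) (hb : b ≤ n) :
    ∃ W : Subgroup (Multiplicative (Fin n → ZMod q)), Nat.card W = q ^ b := by
  classical
  let f : (Fin b → ZMod q) →+ (Fin n → ZMod q) :=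
  { toFun := fun v i => if h : (i : ℕ) < b then v ⟨i, h⟩ else 0
    map_zero' := by funext i; by_cases h : (i : ℕ) < b <;> simp [h]
    map_add' := by intro v w; funext i; by_cases h : (i : ℕ) < b <;> simp [h] }
  have hinj : Function.Injective f := by
    intro v w h
    funext j
    have := congrFun h ⟨j, lt_of_lt_of_le j.2 hb⟩
    simpa [f, j.2] using this
  let g := AddMonoidHom.toMultiplicative f
  have hginj : Function.Injective g := hinj
  refine ⟨g.range, ?_⟩
  rw [card_range_of_injective _ hginj]
  simp [Nat.card_eq_fintype_card, ZMod.card, Fintype.card_fun, g]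

lemma exists_P1 : ∃ P : Subgroup (Multiplicative (ZMod p × ZMod p)), Nat.card P = p := by
  let f : ZMod p →+ (ZMod p × ZMod p) := AddMonoidHom.inl _ _
  have hinj : Function.Injective f := fun a b h => congrArg Prod.fst h
  let g := AddMonoidHom.toMultiplicative f
  have hginj : Function.Injective g := hinj
  refine ⟨g.range, ?_⟩
  rw [card_range_of_injective _ hginj]
  simp [Nat.card_eq_fintype_card, ZMod.card]

lemma exists_subgroup (a b : ℕ) (ha : a ≤ 2) (hb : b ≤ n + 1) (hab : ¬(a = 1 ∧ b = n + 1)) :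
    ∃ H : Subgroup (SD × Multiplicative (Fin n → ZMod q)),
      Nat.card H = p ^ a * q ^ b := by
  by_cases hbn : b ≤ n
  · obtain ⟨W, hW⟩ := exists_W (q := q) b hbn
    interval_cases a
    · refine ⟨(⊥ : Subgroup SD).prod W, ?_⟩
      rw [card_prod_subgroup, Subgroup.card_bot, hW, pow_zero, one_mul]
    · obtain ⟨P, hP⟩ := exists_P1 (p := p)
      refine ⟨(P.map inl).prod W, ?_⟩
      rw [card_prod_subgroup, card_map_of_injective _ _ inl_injective, hP, hW, pow_one]
    · refine ⟨((inl : Multiplicative (ZMod p × ZMod p) →* SD).range).prod W, ?_⟩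
      rw [card_prod_subgroup, card_range_of_injective _ inl_injective, hW]
      congr 1
      simp [Nat.card_eq_fintype_card, ZMod.card]
      ring
  · have hb1 : b = n + 1 := le_antisymm hb (by omega)
    subst hb1
    interval_cases a
    · refine ⟨((inr : Multiplicative (ZMod q) →* SD).range).prod ⊤, ?_⟩
      rw [card_prod_subgroup, card_range_of_injective _ inr_injective, Subgroup.card_top]
      simp [Nat.card_eq_fintype_card, ZMod.card, Fintype.card_fun]
      ring
    · exact absurd ⟨rfl, rfl⟩ hab
    · exact ⟨⊤, by rw [Subgroup.card_top, cardG φ]⟩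
end
end DCLTAux

open DCLTAux in
/-- For primes p, q with q odd, q ∣ p + 1, and C_q acting fixed-point-freely on C_p²,
the group (C_p² ⋊ C_q) × C_q^n has CLT-degree (3n+5)/(3n+6). -/
theorem dCLT_Gpqn (p q n : ℕ) (hp : p.Prime) (hq : q.Prime) (hqodd : Odd q)
    (hdvd : q ∣ p + 1)
    (φ : Multiplicative (ZMod q) →* MulAut (Multiplicative (ZMod p × ZMod p)))
    (hfree : ∀ g : Multiplicative (ZMod q), g ≠ 1 →
      ∀ x : Multiplicative (ZMod p × ZMod p), φ g x = x → x = 1) :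
    dCLT ((Multiplicative (ZMod p × ZMod p) ⋊[φ] Multiplicative (ZMod q)) ×
        Multiplicative (Fin n → ZMod q)) =
      (3 * (n : ℚ) + 5) / (3 * (n : ℚ) + 6) := by
  haveI : Fact p.Prime := ⟨hp⟩
  haveI : Fact q.Prime := ⟨hq⟩
  have hne : p ≠ q := p_ne_q hp hq hdvd
  have hcG : Nat.card ((Multiplicative (ZMod p × ZMod p) ⋊[φ] Multiplicative (ZMod q)) ×
      Multiplicative (Fin n → ZMod q)) = p ^ 2 * q ^ (n+1) := cardG φ
  have hcop : Nat.Coprime (p ^ 2) (q ^ (n+1)) :=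
    ((Nat.coprime_primes hp hq).mpr hne).pow _ _
  have hcG0 : p ^ 2 * q ^ (n+1) ≠ 0 :=
    Nat.mul_ne_zero (pow_ne_zero _ hp.ne_zero) (pow_ne_zero _ hq.ne_zero)
  -- identify the realized divisors
  have hset : {d : ℕ | d ∣ Nat.card ((Multiplicative (ZMod p × ZMod p) ⋊[φ]
        Multiplicative (ZMod q)) × Multiplicative (Fin n → ZMod q)) ∧
        ∃ H : Subgroup ((Multiplicative (ZMod p × ZMod p) ⋊[φ] Multiplicative (ZMod q)) ×
          Multiplicative (Fin n → ZMod q)), Nat.card H = d}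
      = ↑(((p ^ 2 * q ^ (n+1)).divisors).erase (p * q ^ (n+1))) := by
    ext d
    simp only [Set.mem_setOf_eq, Finset.coe_erase, Set.mem_diff, Finset.mem_coe,
      Nat.mem_divisors, Set.mem_singleton_iff]
    constructor
    · rintro ⟨hd, H, hH⟩
      refine ⟨⟨hcG ▸ hd, hcG0⟩, ?_⟩
      rintro rfl
      exact no_subgroup φ hp hq hqodd hdvd hfree H hH
    · rintro ⟨⟨hd, -⟩, hne'⟩
      refine ⟨hcG.symm ▸ hd, ?_⟩
      obtain ⟨u, v, hu, hv, huv⟩ := Nat.dvd_mul.mp hd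
      obtain ⟨a, ha, rfl⟩ := (Nat.dvd_prime_pow hp).mp hu
      obtain ⟨b, hb, rfl⟩ := (Nat.dvd_prime_pow hq).mp hv
      have hab : ¬(a = 1 ∧ b = n + 1) := by
        rintro ⟨rfl, rfl⟩
        rw [pow_one] at huv
        exact hne' huv.symm
      obtain ⟨H, hH⟩ := exists_subgroup φ a b ha hb hab
      exact ⟨H, by rw [hH, huv]⟩
  have hmem : p * q ^ (n+1) ∈ (p ^ 2 * q ^ (n+1)).divisors :=
    Nat.mem_divisors.mpr ⟨mul_dvd_mul (dvd_pow_self p two_ne_zero) dvd_rfl, hcG0⟩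
  have hdiv : (p ^ 2 * q ^ (n+1)).divisors.card = 3 * (n + 2) := by
    rw [hcop.card_divisors_mul, Nat.divisors_prime_pow hp, Nat.divisors_prime_pow hq]
    simp
  have h1 : numRealizedDivisors ((Multiplicative (ZMod p × ZMod p) ⋊[φ]
      Multiplicative (ZMod q)) × Multiplicative (Fin n → ZMod q))
      = 3 * n + 5 := by
    rw [numRealizedDivisors]
    calc Nat.card {d : ℕ // d ∣ Nat.card ((Multiplicative (ZMod p × ZMod p) ⋊[φ]
          Multiplicative (ZMod q)) × Multiplicative (Fin n → ZMod q)) ∧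
          ∃ H : Subgroup ((Multiplicative (ZMod p × ZMod p) ⋊[φ] Multiplicative (ZMod q)) ×
            Multiplicative (Fin n → ZMod q)), Nat.card H = d}
        = Set.ncard {d : ℕ | d ∣ Nat.card ((Multiplicative (ZMod p × ZMod p) ⋊[φ]
          Multiplicative (ZMod q)) × Multiplicative (Fin n → ZMod q)) ∧
          ∃ H : Subgroup ((Multiplicative (ZMod p × ZMod p) ⋊[φ] Multiplicative (ZMod q)) ×
            Multiplicative (Fin n → ZMod q)), Nat.card H = d} := (Nat.card_coe_set_eq _)
      _ = (((p ^ 2 * q ^ (n+1)).divisors).erase (p * q ^ (n+1))).card := by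
          rw [hset, Set.ncard_coe_finset]
      _ = 3 * n + 5 := by
          rw [Finset.card_erase_of_mem hmem, hdiv]
          omega
  rw [dCLT, h1, hcG, hdiv]
  push_cast
  ring_nf
end

section
/- Let p and q be primes with q odd and q dividing p + 1, with C_q acting fixed-point-freely on C_p^2. Then the group (C_p^2 ⋊ C_q) × C_q^n has no subgroup of order p·q^{n+1}. -/
open SemidirectProduct

instance sdpFinite {N G : Type*} [Group N] [Group G] [Finite N] [Finite G]
    {φ : G →* MulAut N} : Finite (N ⋊[φ] G) :=
  Finite.of_injective (fun x => (x.left, x.right)) (fun _ _ h =>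
    SemidirectProduct.ext (congrArg Prod.fst h) (congrArg Prod.snd h))

/-- For primes p, q with q odd, q ∣ p + 1, and C_q acting fixed-point-freely on C_p²,
the group (C_p² ⋊ C_q) × C_q^n has no subgroup of order p·q^(n+1). -/
theorem Gpqn_no_subgroup (p q n : ℕ) (hp : p.Prime) (hq : q.Prime) (hqodd : Odd q)
    (hdvd : q ∣ p + 1)
    (φ : Multiplicative (ZMod q) →* MulAut (Multiplicative (ZMod p × ZMod p)))
    (hfree : ∀ g : Multiplicative (ZMod q), g ≠ 1 →
      ∀ x : Multiplicative (ZMod p × ZMod p), φ g x = x → x = 1) :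
    ∀ H : Subgroup ((Multiplicative (ZMod p × ZMod p) ⋊[φ] Multiplicative (ZMod q)) ×
        Multiplicative (Fin n → ZMod q)),
      Nat.card H ≠ p * q ^ (n + 1) := by
  intro H hcard
  haveI : Fact p.Prime := ⟨hp⟩
  haveI : Fact q.Prime := ⟨hq⟩
  have hpq : p ≠ q := by
    rintro rfl
    have : p ∣ 1 := by
      have := Nat.dvd_sub hdvd (dvd_refl p)
      simpa using this
    have h1 := Nat.eq_one_of_dvd_one this
    have h2 := hp.one_lt
    omega
  -- the projection to the q-part
  let π₂ : ↥H →* Multiplicative (ZMod q) × Multiplicative (Fin n → ZMod q) :=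
    ((rightHom.comp (MonoidHom.fst (Multiplicative (ZMod p × ZMod p) ⋊[φ] Multiplicative (ZMod q)) (Multiplicative (Fin n → ZMod q)))).prod (MonoidHom.snd (Multiplicative (ZMod p × ZMod p) ⋊[φ] Multiplicative (ZMod q)) (Multiplicative (Fin n → ZMod q)))).comp H.subtype
  have hπ₂ : ∀ x : ↥H, π₂ x = ((x : (Multiplicative (ZMod p × ZMod p) ⋊[φ] Multiplicative (ZMod q)) × Multiplicative (Fin n → ZMod q)).1.right, (x : (Multiplicative (ZMod p × ZMod p) ⋊[φ] Multiplicative (ZMod q)) × Multiplicative (Fin n → ZMod q)).2) := fun x => rfl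
  have mem_ker : ∀ x : ↥H, x ∈ π₂.ker ↔
      ((x : (Multiplicative (ZMod p × ZMod p) ⋊[φ] Multiplicative (ZMod q)) × Multiplicative (Fin n → ZMod q)).1.right = 1 ∧ (x : (Multiplicative (ZMod p × ZMod p) ⋊[φ] Multiplicative (ZMod q)) × Multiplicative (Fin n → ZMod q)).2 = 1) := by
    intro x
    rw [MonoidHom.mem_ker, hπ₂, Prod.ext_iff]
    exact Iff.rfl
  -- the kernel injects into Gp
  have hker_mem : ∀ x : ↥π₂.ker, ((x : ↥H) : (Multiplicative (ZMod p × ZMod p) ⋊[φ] Multiplicative (ZMod q)) × Multiplicative (Fin n → ZMod q)).1.right = 1 ∧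
      ((x : ↥H) : (Multiplicative (ZMod p × ZMod p) ⋊[φ] Multiplicative (ZMod q)) × Multiplicative (Fin n → ZMod q)).2 = 1 := fun x => (mem_ker _).mp x.2
  let f : ↥π₂.ker →* Multiplicative (ZMod p × ZMod p) :=
    { toFun := fun x => ((x : ↥H) : (Multiplicative (ZMod p × ZMod p) ⋊[φ] Multiplicative (ZMod q)) × Multiplicative (Fin n → ZMod q)).1.left
      map_one' := rfl
      map_mul' := by
        intro x y
        have hx := (hker_mem x).1
        show (((x : ↥H) : (Multiplicative (ZMod p × ZMod p) ⋊[φ] Multiplicative (ZMod q)) × Multiplicative (Fin n → ZMod q)).1 * ((y : ↥H) : (Multiplicative (ZMod p × ZMod p) ⋊[φ] Multiplicative (ZMod q)) × Multiplicative (Fin n → ZMod q)).1).left = _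
        rw [mul_left, hx, map_one]
        rfl }
  have hf : Function.Injective f := by
    intro x y hxy
    have hx := hker_mem x
    have hy := hker_mem y
    apply Subtype.ext; apply Subtype.ext
    apply Prod.ext
    · exact SemidirectProduct.ext hxy (hx.1.trans hy.1.symm)
    · exact hx.2.trans hy.2.symm
  have cardGp : Nat.card (Multiplicative (ZMod p × ZMod p)) = p * p := by
    simp [Nat.card_eq_fintype_card]
  have hker_dvd : Nat.card ↥π₂.ker ∣ p * p := by
    rw [← cardGp]
    exact Subgroup.card_dvd_of_injective f hf
  have cardCod : Nat.card (Multiplicative (ZMod q) × Multiplicative (Fin n → ZMod q)) = q ^ (n + 1) := by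
    simp [Nat.card_eq_fintype_card, pow_succ, mul_comm]
  have hrange_dvd : Nat.card ↥π₂.range ∣ q ^ (n + 1) := by
    rw [← cardCod]; exact Subgroup.card_subgroup_dvd_card _
  have hsplit : p * q ^ (n + 1) = Nat.card ↥π₂.range * Nat.card ↥π₂.ker := by
    rw [← hcard, Subgroup.card_eq_card_quotient_mul_card_subgroup π₂.ker,
      Nat.card_congr (QuotientGroup.quotientKerEquivRange π₂).toEquiv]
  -- card ker = p
  have hcop : Nat.Coprime p (q ^ (n+1)) := (Nat.coprime_primes hp hq).mpr hpq |>.pow_right _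
  have hker_card : Nat.card ↥π₂.ker = p := by
    have h2 : Nat.card ↥π₂.ker ∣ p * q ^ (n+1) := hsplit ▸ dvd_mul_left _ _
    have hpp : Nat.card ↥π₂.ker ∣ p ^ 2 := by rw [pow_two]; exact hker_dvd
    obtain ⟨a, ha, hEq⟩ := (Nat.dvd_prime_pow hp).mp hpp
    have h1 : Nat.card ↥π₂.ker ∣ p := by
      interval_cases a
      · rw [hEq]; simp
      · rw [hEq]; simp
      · exfalso
        rw [hEq, pow_two] at h2
        have h5 := (Nat.mul_dvd_mul_iff_left hp.pos).mp h2
        exact hpq (((Nat.prime_dvd_prime_iff_eq hp hq).mp (hp.dvd_of_dvd_pow h5)))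
    have h3 : p ∣ Nat.card ↥π₂.ker := by
      have h4 : p ∣ Nat.card ↥π₂.range * Nat.card ↥π₂.ker := by
        rw [← hsplit]; exact dvd_mul_right _ _
      refine (Nat.Coprime.dvd_of_dvd_mul_left ?_ h4)
      exact Nat.Coprime.coprime_dvd_right hrange_dvd hcop
    exact Nat.dvd_antisymm h1 h3
  -- there is h ∈ H with nontrivial Gq-component
  have hA : ∃ h : ↥H, ((h : (Multiplicative (ZMod p × ZMod p) ⋊[φ] Multiplicative (ZMod q)) × Multiplicative (Fin n → ZMod q)).1.right) ≠ 1 := by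
    by_contra hA
    push_neg at hA
    have hle : π₂.range ≤ (⊥ : Subgroup (Multiplicative (ZMod q))).prod ⊤ := by
      rintro y ⟨x, rfl⟩
      refine Subgroup.mem_prod.mpr ⟨?_, trivial⟩
      rw [hπ₂, Subgroup.mem_bot]
      exact hA x
    have hcardT : Nat.card ↥((⊥ : Subgroup (Multiplicative (ZMod q))).prod (⊤ : Subgroup (Multiplicative (Fin n → ZMod q)))) = q ^ n := by
      rw [Nat.card_congr (Subgroup.prodEquiv _ _).toEquiv, Nat.card_prod,
        Subgroup.card_bot, Subgroup.card_top, one_mul]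
      simp [Nat.card_eq_fintype_card]
    have hrange_dvd2 : Nat.card ↥π₂.range ∣ q ^ n :=
      hcardT ▸ Subgroup.card_dvd_of_le hle
    have hR : q ^ (n+1) = Nat.card ↥π₂.range :=
      Nat.eq_of_mul_eq_mul_left hp.pos (by rw [hsplit, hker_card, mul_comm])
    rw [← hR] at hrange_dvd2
    have h9 := Nat.le_of_dvd (pow_pos hq.pos n) hrange_dvd2
    have h10 := Nat.pow_lt_pow_succ hq.one_lt (n := n)
    omega
  -- the kernel is cyclic of order p
  have : Nontrivial ↥π₂.ker := by
    rw [← Finite.one_lt_card_iff_nontrivial, hker_card]; exact hp.one_lt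
  obtain ⟨x₀, hx₀⟩ := exists_ne (1 : ↥π₂.ker)
  have hx₀ord : orderOf x₀ = p := by
    refine (hp.eq_one_or_self_of_dvd _ ?_).resolve_left ?_
    · have h11 := orderOf_dvd_natCard x₀
      rwa [hker_card] at h11
    · simpa [orderOf_eq_one_iff] using hx₀
  have htop : Subgroup.zpowers x₀ = (⊤ : Subgroup ↥π₂.ker) :=
    Subgroup.eq_top_of_card_eq _ (by rw [Nat.card_zpowers, hx₀ord, hker_card])
  obtain ⟨h, hk⟩ := hA
  set k : Multiplicative (ZMod q) := ((h : (Multiplicative (ZMod p × ZMod p) ⋊[φ] Multiplicative (ZMod q)) × Multiplicative (Fin n → ZMod q)).1.right) with hkdef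
  have hy : h * ((x₀ : ↥H) : ↥H) * h⁻¹ ∈ π₂.ker := by
    rw [MonoidHom.mem_ker, map_mul, map_mul, map_inv]
    have h1 : π₂ (x₀ : ↥H) = 1 := x₀.2
    rw [h1, mul_one, mul_inv_cancel]
  have hmem : (⟨h * (x₀ : ↥H) * h⁻¹, hy⟩ : ↥π₂.ker) ∈ Subgroup.zpowers x₀ := by
    rw [htop]; trivial
  obtain ⟨m, hm⟩ := Subgroup.mem_zpowers_iff.mp hmem
  have hmG : ((x₀ : ↥H) : (Multiplicative (ZMod p × ZMod p) ⋊[φ] Multiplicative (ZMod q)) × Multiplicative (Fin n → ZMod q)) ^ m =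
      (h : (Multiplicative (ZMod p × ZMod p) ⋊[φ] Multiplicative (ZMod q)) × Multiplicative (Fin n → ZMod q)) * ((x₀ : ↥H) : (Multiplicative (ZMod p × ZMod p) ⋊[φ] Multiplicative (ZMod q)) × Multiplicative (Fin n → ZMod q)) * ((h : (Multiplicative (ZMod p × ZMod p) ⋊[φ] Multiplicative (ZMod q)) × Multiplicative (Fin n → ZMod q)))⁻¹ := by
    have := congrArg (fun z : ↥π₂.ker => ((z : ↥H) : (Multiplicative (ZMod p × ZMod p) ⋊[φ] Multiplicative (ZMod q)) × Multiplicative (Fin n → ZMod q))) hm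
    simpa using this
  -- structure of x₀
  set a : Multiplicative (ZMod p × ZMod p) := ((x₀ : ↥H) : (Multiplicative (ZMod p × ZMod p) ⋊[φ] Multiplicative (ZMod q)) × Multiplicative (Fin n → ZMod q)).1.left with hadef
  have hx₀mem := hker_mem x₀
  have hx₀G : ((x₀ : ↥H) : (Multiplicative (ZMod p × ZMod p) ⋊[φ] Multiplicative (ZMod q)) × Multiplicative (Fin n → ZMod q)) = (inl a, 1) := by
    refine Prod.ext ?_ hx₀mem.2
    exact SemidirectProduct.ext rfl hx₀mem.1
  have ha1 : a ≠ 1 := by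
    intro h0
    apply hx₀
    apply Subtype.ext; apply Subtype.ext
    rw [hx₀G, h0, map_one]
    rfl
  -- conjugation computation
  have hconj : (h : (Multiplicative (ZMod p × ZMod p) ⋊[φ] Multiplicative (ZMod q)) × Multiplicative (Fin n → ZMod q)) * ((inl a, 1) : (Multiplicative (ZMod p × ZMod p) ⋊[φ] Multiplicative (ZMod q)) × Multiplicative (Fin n → ZMod q)) * ((h : (Multiplicative (ZMod p × ZMod p) ⋊[φ] Multiplicative (ZMod q)) × Multiplicative (Fin n → ZMod q)))⁻¹
      = (inl ((φ k) a), 1) := by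
    refine Prod.ext ?_ (by simp)
    show (h : (Multiplicative (ZMod p × ZMod p) ⋊[φ] Multiplicative (ZMod q)) × Multiplicative (Fin n → ZMod q)).1 * inl a * ((h : (Multiplicative (ZMod p × ZMod p) ⋊[φ] Multiplicative (ZMod q)) × Multiplicative (Fin n → ZMod q)).1)⁻¹ = inl ((φ k) a)
    refine SemidirectProduct.ext ?_ (by simp [hkdef])
    show ((h : (Multiplicative (ZMod p × ZMod p) ⋊[φ] Multiplicative (ZMod q)) × Multiplicative (Fin n → ZMod q)).1 * inl a).left *
        (φ (((h : (Multiplicative (ZMod p × ZMod p) ⋊[φ] Multiplicative (ZMod q)) × Multiplicative (Fin n → ZMod q)).1 * inl a).right)) (((h : (Multiplicative (ZMod p × ZMod p) ⋊[φ] Multiplicative (ZMod q)) × Multiplicative (Fin n → ZMod q)).1)⁻¹.left) = φ k a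
    rw [mul_left, mul_right, left_inl, right_inl, mul_one, inv_left, ← hkdef]
    rw [map_inv φ, MulAut.apply_inv_self]
    rw [mul_comm ((h : (Multiplicative (ZMod p × ZMod p) ⋊[φ] Multiplicative (ZMod q)) × Multiplicative (Fin n → ZMod q)).1.left) ((φ k) a), mul_assoc, mul_inv_cancel, mul_one]
  -- the power computation
  have hpow : ((inl a, 1) : (Multiplicative (ZMod p × ZMod p) ⋊[φ] Multiplicative (ZMod q)) × Multiplicative (Fin n → ZMod q)) ^ m = (inl (a ^ m), 1) := by
    refine Prod.ext ?_ (by simp)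
    show (inl a : Multiplicative (ZMod p × ZMod p) ⋊[φ] Multiplicative (ZMod q)) ^ m = inl (a ^ m)
    rw [← map_zpow]
  have ham : a ^ m = (φ k) a := by
    have := hmG
    rw [hx₀G, hpow, hconj] at this
    exact inl_injective (congrArg Prod.fst this)
  -- iterate the action
  have hiter : ∀ j : ℕ, (φ (k ^ j)) a = a ^ ((m : ℤ) ^ j) := by
    intro j
    induction j with
    | zero => simp
    | succ j ih =>
      rw [pow_succ k j, map_mul, MulAut.mul_apply, ← ham, map_zpow, ih, ← zpow_mul,
        ← pow_succ]
  have hkq : k ^ q = 1 := by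
    apply Multiplicative.toAdd.injective
    simp [toAdd_pow]
  have haq : a ^ ((m : ℤ) ^ q) = a := by
    rw [← hiter q, hkq, map_one]
    rfl
  have hap : a ^ p = 1 := by
    apply Multiplicative.toAdd.injective
    simp [toAdd_pow]
    ext <;> simp
  have haord : orderOf a = p := by
    refine (hp.eq_one_or_self_of_dvd _ (orderOf_dvd_of_pow_eq_one hap)).resolve_left ?_
    simpa [orderOf_eq_one_iff] using ha1
  have hpd1 : (p : ℤ) ∣ m ^ q - 1 := by
    rw [← haord, orderOf_dvd_iff_zpow_eq_one, zpow_sub, haq, zpow_one, mul_inv_cancel]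
  have hpd2 : ¬ (p : ℤ) ∣ m - 1 := by
    intro hd
    rw [← haord, orderOf_dvd_iff_zpow_eq_one, zpow_sub, zpow_one] at hd
    have h7 : a ^ m = a := mul_inv_eq_one.mp hd
    exact ha1 (hfree k hk a (by rw [← ham, h7]))
  -- pass to ZMod p
  have hu1 : ((m : ZMod p)) ^ q = 1 := by
    have h12 := (ZMod.intCast_zmod_eq_zero_iff_dvd _ p).mpr hpd1
    push_cast at h12
    rwa [sub_eq_zero] at h12
  have hu2 : ((m : ZMod p)) ≠ 1 := by
    intro hu
    apply hpd2
    apply (ZMod.intCast_zmod_eq_zero_iff_dvd _ p).mp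
    push_cast [hu]
    ring
  have hunit : IsUnit ((m : ZMod p)) := by
    refine IsUnit.of_mul_eq_one (a := (m : ZMod p)) ((m : ZMod p) ^ (q - 1)) ?_
    rw [← pow_succ', Nat.sub_add_cancel hq.one_lt.le]
    exact hu1
  have hwq : hunit.unit ^ q = 1 := by
    apply Units.ext
    push_cast [hunit.unit_spec]
    exact hu1
  have hw1 : hunit.unit ≠ 1 := by
    intro hw
    apply hu2
    rw [← hunit.unit_spec, hw, Units.val_one]
  have hword : orderOf hunit.unit = q := by
    refine (hq.eq_one_or_self_of_dvd _ (orderOf_dvd_of_pow_eq_one hwq)).resolve_left ?_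
    simpa [orderOf_eq_one_iff] using hw1
  have hq_dvd : q ∣ p - 1 := by
    have h13 := orderOf_dvd_natCard hunit.unit
    rwa [hword, Nat.card_eq_fintype_card, ZMod.card_units_eq_totient,
      Nat.totient_prime hp] at h13
  have h14 := Nat.dvd_sub hdvd hq_dvd
  have h15 : p + 1 - (p - 1) = 2 := by have := hp.one_lt; omega
  rw [h15] at h14
  have h16 := (Nat.prime_dvd_prime_iff_eq hq Nat.prime_two).mp h14
  rw [h16, Nat.odd_iff] at hqodd
  simp at hqodd
end

section
/- For every ε > 0 there exists a finite non-CLT group G with d_CLT(G) > 1 - ε; in particular there is no constant c < 1 such that d_CLT(G) ≤ c for all finite non-CLT groups G. -/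
abbrev Cn (n : ℕ) : Type := Multiplicative (ZMod (3 ^ n))
abbrev Gn (n : ℕ) : Type := alternatingGroup (Fin 4) × Cn n

instance (n : ℕ) : NeZero (3 ^ n) := ⟨by positivity⟩
instance (n : ℕ) : Finite (Gn n) := by
  have : Fintype (ZMod (3^n)) := ZMod.fintype _
  infer_instance

lemma cardA4 : Nat.card (alternatingGroup (Fin 4)) = 12 := by
  rw [Nat.card_eq_fintype_card]
  have h := two_mul_card_alternatingGroup (α := Fin 4)
  rw [Fintype.card_perm, Fintype.card_fin, show Nat.factorial 4 = 24 from rfl] at h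
  omega

lemma cardCn (n : ℕ) : Nat.card (Cn n) = 3 ^ n := by
  simp [Cn, Nat.card_eq_fintype_card, ZMod.card]

lemma cardGn (n : ℕ) : Nat.card (Gn n) = 4 * 3 ^ (n + 1) := by
  rw [Nat.card_prod, cardA4, cardCn]; ring

lemma card_prod_subgroup {n : ℕ} (K : Subgroup (alternatingGroup (Fin 4)))
    (L : Subgroup (Cn n)) : Nat.card (K.prod L : Subgroup (Gn n)) = Nat.card K * Nat.card L := by
  rw [Nat.card_congr (K.prodEquiv L).toEquiv, Nat.card_prod]

lemma exists_A4_subgroup (y : ℕ) (hy : y = 1 ∨ y = 2 ∨ y = 3 ∨ y = 4) :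
    ∃ K : Subgroup (alternatingGroup (Fin 4)), Nat.card K = y := by
  haveI : Fact (Nat.Prime 2) := ⟨by norm_num⟩
  haveI : Fact (Nat.Prime 3) := ⟨by norm_num⟩
  rcases hy with h | h | h | h <;> subst h
  · exact ⟨⊥, Subgroup.card_bot⟩
  · have := Sylow.exists_subgroup_card_pow_prime (G := alternatingGroup (Fin 4)) 2
      (n := 1) (by rw [cardA4]; norm_num)
    simpa using this
  · have := Sylow.exists_subgroup_card_pow_prime (G := alternatingGroup (Fin 4)) 3
      (n := 1) (by rw [cardA4]; norm_num)
    simpa using this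
  · have := Sylow.exists_subgroup_card_pow_prime (G := alternatingGroup (Fin 4)) 2
      (n := 2) (by rw [cardA4]; norm_num)
    simpa using this

lemma realized (n : ℕ) (d : ℕ) (hd : d ∣ 4 * 3 ^ (n + 1)) (hne : d ≠ 2 * 3 ^ (n + 1)) :
    ∃ H : Subgroup (Gn n), Nat.card H = d := by
  haveI : Fact (Nat.Prime 3) := ⟨by norm_num⟩
  obtain ⟨y, z, hy, hz, hyz⟩ := Nat.dvd_mul.mp hd
  obtain ⟨b, hb, rfl⟩ := (Nat.dvd_prime_pow (by norm_num)).mp hz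
  have hy' : y = 1 ∨ y = 2 ∨ y = 4 := by
    have h4 : y ≤ 4 := Nat.le_of_dvd (by norm_num) hy
    have h0 : 0 < y := Nat.pos_of_dvd_of_pos hy (by norm_num)
    interval_cases y <;> revert hy <;> decide
  rcases Nat.lt_or_ge b (n + 1) with hbn | hbn
  · -- b ≤ n : product of subgroup of A4 of order y and subgroup of Cn of order 3^b
    obtain ⟨K, hK⟩ := exists_A4_subgroup y (by tauto)
    obtain ⟨L, hL⟩ := Sylow.exists_subgroup_card_pow_prime (G := Cn n) 3 (n := b)
      (by rw [cardCn]; exact pow_dvd_pow 3 (by omega))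
    exact ⟨K.prod L, by rw [card_prod_subgroup, hK, hL, hyz]⟩
  · have hb1 : b = n + 1 := le_antisymm hb hbn
    subst hb1
    rcases hy' with h | h | h <;> subst h
    · -- order 3^(n+1) : C3 in A4 times all of Cn
      obtain ⟨K, hK⟩ := exists_A4_subgroup 3 (by tauto)
      refine ⟨K.prod ⊤, ?_⟩
      rw [card_prod_subgroup, hK, Subgroup.card_top, cardCn, ← hyz]
      ring
    · exact absurd hyz.symm hne
    · exact ⟨⊤, by rw [Subgroup.card_top, cardGn, ← hyz]⟩

set_option maxRecDepth 10000 in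
lemma a4_decomp : ∀ x : alternatingGroup (Fin 4),
    ∃ a b : alternatingGroup (Fin 4), a ^ 3 = 1 ∧ b ^ 3 = 1 ∧ x = a * b := by decide

lemma mem_of_cube_eq_one {n : ℕ} (H : Subgroup (Gn n))
    (hsq : ∀ g : Gn n, g ^ 2 ∈ H) {u : Gn n} (hu : u ^ 3 = 1) : u ∈ H := by
  have h4 : (u ^ 2) ^ 2 = u := by
    rw [← pow_mul]
    calc u ^ (2*2) = u ^ 3 * u := by rw [← pow_succ]
    _ = u := by rw [hu, one_mul]
  have := hsq (u ^ 2)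
  rwa [h4] at this

lemma not_realized (n : ℕ) :
    ¬ ∃ H : Subgroup (Gn n), Nat.card H = 2 * 3 ^ (n + 1) := by
  rintro ⟨H, hH⟩
  have hpos : (0:ℕ) < 3 ^ (n + 1) := by positivity
  have hidx : H.index = 2 := by
    have h := Subgroup.card_mul_index H
    rw [hH, cardGn] at h
    have h2 : 2 * 3 ^ (n+1) * H.index = 2 * 3 ^ (n+1) * 2 := by rw [h]; ring
    exact Nat.eq_of_mul_eq_mul_left (by positivity) h2
  have hsq : ∀ g : Gn n, g ^ 2 ∈ H := fun g => Subgroup.sq_mem_of_index_two hidx g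
  have htop : H = ⊤ := by
    rw [Subgroup.eq_top_iff']
    intro g
    obtain ⟨x, c⟩ := g
    have hx : ((x, 1) : Gn n) ∈ H := by
      obtain ⟨a, b, ha, hb, hab⟩ := a4_decomp x
      have hamem : ((a, 1) : Gn n) ∈ H :=
        mem_of_cube_eq_one H hsq (by rw [Prod.pow_mk, ha, one_pow]; rfl)
      have hbmem : ((b, 1) : Gn n) ∈ H :=
        mem_of_cube_eq_one H hsq (by rw [Prod.pow_mk, hb, one_pow]; rfl)
      have : ((a, 1) : Gn n) * (b, 1) = (x, 1) := by
        rw [Prod.mk_mul_mk, hab, one_mul]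
      exact this ▸ H.mul_mem hamem hbmem
    have hc : ((1, c) : Gn n) ∈ H := by
      have hodd : Odd (3 ^ n) := Odd.pow (by decide)
      obtain ⟨m, hm⟩ := hodd
      have hcard : ((1, c) : Gn n) ^ (3 ^ n) = 1 := by
        have : c ^ (3 ^ n) = 1 := by
          have := pow_card_eq_one' (x := c)
          rwa [cardCn] at this
        rw [Prod.pow_mk, this, one_pow]; rfl
      have key : (((1, c) : Gn n) ^ (m + 1)) ^ 2 = (1, c) := by
        rw [← pow_mul]
        have : (m + 1) * 2 = 3 ^ n + 1 := by omega
        rw [this, pow_succ, hcard, one_mul]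
      have := hsq (((1, c) : Gn n) ^ (m + 1))
      rwa [key] at this
    have : ((x, 1) : Gn n) * (1, c) = (x, c) := by
      rw [Prod.mk_mul_mk, mul_one, one_mul]
    exact this ▸ H.mul_mem hx hc
  rw [htop, Subgroup.card_top, cardGn] at hH
  omega


lemma tauGn (n : ℕ) : (Nat.card (Gn n)).divisors.card = 3 * n + 6 := by
  rw [cardGn]
  have hcop : Nat.Coprime 4 (3 ^ (n + 1)) := Nat.Coprime.pow_right _ (by norm_num)
  rw [hcop.card_divisors_mul]
  have h4 : (Nat.divisors 4).card = 3 := by decide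
  rw [h4, Nat.divisors_prime_pow (by norm_num : Nat.Prime 3), Finset.card_map,
    Finset.card_range]
  ring

lemma numRealizedGn (n : ℕ) : numRealizedDivisors (Gn n) = 3 * n + 5 := by
  have hmem : 2 * 3 ^ (n + 1) ∈ (Nat.card (Gn n)).divisors := by
    rw [cardGn, Nat.mem_divisors]
    exact ⟨⟨2, by ring⟩, by positivity⟩
  have hset : {d : ℕ | d ∣ Nat.card (Gn n) ∧ ∃ H : Subgroup (Gn n), Nat.card H = d}
      = ↑((Nat.card (Gn n)).divisors.erase (2 * 3 ^ (n + 1))) := by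
    ext d
    simp only [Set.mem_setOf_eq, Finset.coe_erase, Set.mem_diff, Finset.mem_coe,
      Nat.mem_divisors, Set.mem_singleton_iff]
    constructor
    · rintro ⟨hdvd, hex⟩
      refine ⟨⟨hdvd, by rw [cardGn]; positivity⟩, ?_⟩
      rintro rfl
      exact not_realized n hex
    · rintro ⟨⟨hdvd, -⟩, hne⟩
      exact ⟨hdvd, realized n d (by rwa [cardGn] at hdvd) hne⟩
  have : numRealizedDivisors (Gn n)
      = Nat.card ({d : ℕ | d ∣ Nat.card (Gn n) ∧ ∃ H : Subgroup (Gn n), Nat.card H = d} : Set ℕ) :=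
    rfl
  rw [this, hset, Nat.card_coe_set_eq, Set.ncard_coe_finset,
    Finset.card_erase_of_mem hmem, tauGn]
  omega

/-- For every ε > 0 there is a finite non-CLT group G with dCLT(G) > 1 - ε; hence no
constant c < 1 bounds dCLT on non-CLT groups. -/
theorem exists_nonCLT_dCLT_close_to_one (ε : ℚ) (hε : 0 < ε) :
    ∃ (G : Type) (_ : Group G) (_ : Finite G),
      (¬ ∀ d : ℕ, d ∣ Nat.card G → ∃ H : Subgroup G, Nat.card H = d) ∧
      dCLT G > 1 - ε := by
  obtain ⟨m, hm⟩ := exists_nat_gt (1 / ε)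
  refine ⟨Gn m, inferInstance, inferInstance, ?_, ?_⟩
  · intro hall
    exact not_realized m ⟨_, (hall (2 * 3 ^ (m + 1)) (by rw [cardGn]; exact ⟨2, by ring⟩)).choose_spec⟩
  · rw [dCLT, numRealizedGn, tauGn]
    push_cast
    have h6 : (0:ℚ) < 3 * m + 6 := by positivity
    have h1 : 1 / ε < 3 * (m:ℚ) + 6 := by
      refine lt_of_lt_of_le hm ?_
      have : (0:ℚ) ≤ (m:ℚ) := by positivity
      linarith
    have h2 : 1 < (3 * (m:ℚ) + 6) * ε := (div_lt_iff₀ hε).mp h1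
    rw [gt_iff_lt, ← sub_pos]
    rw [div_sub' (ne_of_gt h6)]
    apply div_pos _ h6
    nlinarith
end
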